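/- arXiv:1206.0556 — 9 statements merged into one kernel-verified Lean document; each statement's English description precedes it below -/
import Mathlib

section
/- Let P₀ be a symmetric positive semidefinite n×n real matrix, R a symmetric positive semidefinite m×m real matrix, and H an m×n real matrix such that H P₀ Hᵀ + R is invertible. Then the a posteriori covariance matrix P_p = P₀ − P₀ Hᵀ (H P₀ Hᵀ + R)⁻¹ H P₀ is symmetric positive semidefinite. -/
open Matrix

/-!
With the Kalman gain `K = P₀ Hᴴ S⁻¹`, `S = H P₀ Hᴴ + R`, the a posteriori covariance has the
Joseph form `(1 - K H) P₀ (1 - K H)ᴴ + K R Kᴴ`, a sum of two congruences of positive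
semidefinite matrices. The only property of `S⁻¹` this needs is `S⁻¹ S S⁻¹ = S⁻¹`, which also holds
when `S` is singular, since then `S⁻¹ = 0`.
-/

namespace Matrix

variable {m n R : Type*} [Fintype m] [Fintype n] [DecidableEq n] [CommRing R]

theorem nonsing_inv_mul_self_mul_nonsing_inv (A : Matrix n n R) : A⁻¹ * A * A⁻¹ = A⁻¹ := by
  by_cases hA : IsUnit A.det
  · rw [nonsing_inv_mul A hA, Matrix.one_mul]
  · rw [nonsing_inv_apply_not_isUnit A hA, Matrix.mul_zero]

variable [StarRing R]

theorem joseph_form_expand (P : Matrix n n R) (R₀ : Matrix m m R) (H : Matrix m n R)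
    (K : Matrix n m R) :
    (1 - K * H) * P * (1 - K * H)ᴴ + K * R₀ * Kᴴ
      = P - K * H * P - P * Hᴴ * Kᴴ + K * (H * P * Hᴴ + R₀) * Kᴴ := by
  simp only [conjTranspose_sub, conjTranspose_one, conjTranspose_mul, Matrix.sub_mul,
    Matrix.mul_sub, Matrix.mul_add, Matrix.add_mul, Matrix.one_mul, Matrix.mul_one,
    Matrix.mul_assoc]
  abel

variable [DecidableEq m]

theorem joseph_form_of_gain {P : Matrix n n R} {R₀ : Matrix m m R} (H : Matrix m n R)
    (hP : P.IsHermitian) (hR₀ : R₀.IsHermitian) :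
    let S := H * P * Hᴴ + R₀
    let K := P * Hᴴ * S⁻¹
    (1 - K * H) * P * (1 - K * H)ᴴ + K * R₀ * Kᴴ = P - P * Hᴴ * S⁻¹ * H * P := by
  intro S K
  have hS : S.IsHermitian := (isHermitian_mul_mul_conjTranspose H hP).add hR₀
  have hK : Kᴴ = S⁻¹ * H * P := by
    simp only [K, conjTranspose_mul, conjTranspose_conjTranspose, hP.eq, hS.inv.eq,
      Matrix.mul_assoc]
  have hKSK : K * S * Kᴴ = P * Hᴴ * S⁻¹ * H * P := by
    rw [hK]
    calc P * Hᴴ * S⁻¹ * S * (S⁻¹ * H * P) = P * Hᴴ * (S⁻¹ * S * S⁻¹) * H * P := by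
          simp only [Matrix.mul_assoc]
      _ = P * Hᴴ * S⁻¹ * H * P := by rw [nonsing_inv_mul_self_mul_nonsing_inv]
  rw [joseph_form_expand, hKSK, hK]
  simp only [K, Matrix.mul_assoc]
  abel

theorem PosSemidef.sub_mul_mul_nonsing_inv_mul_mul [PartialOrder R] [AddLeftMono R]
    {P : Matrix n n R} {R₀ : Matrix m m R} (H : Matrix m n R)
    (hP : P.PosSemidef) (hR₀ : R₀.PosSemidef) :
    (P - P * Hᴴ * (H * P * Hᴴ + R₀)⁻¹ * H * P).PosSemidef := by
  rw [← joseph_form_of_gain H hP.isHermitian hR₀.isHermitian]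
  exact (hP.mul_mul_conjTranspose_same _).add (hR₀.mul_mul_conjTranspose_same _)

end Matrix

theorem stmt_2_general {m n : ℕ}
    (P₀ : Matrix (Fin n) (Fin n) ℝ) (R : Matrix (Fin m) (Fin m) ℝ)
    (H : Matrix (Fin m) (Fin n) ℝ)
    (hP₀ : P₀.PosSemidef) (hR : R.PosSemidef) :
    (P₀ - P₀ * Hᵀ * (H * P₀ * Hᵀ + R)⁻¹ * H * P₀).PosSemidef := by
  simpa only [conjTranspose_eq_transpose_of_trivial] using
    hP₀.sub_mul_mul_nonsing_inv_mul_mul H hR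

/-- The a posteriori covariance matrix `P_p = P₀ − P₀ Hᵀ (H P₀ Hᵀ + R)⁻¹ H P₀` is symmetric
positive semidefinite whenever `P₀` and `R` are symmetric positive semidefinite and
`H P₀ Hᵀ + R` is invertible. -/
theorem stmt_2 {m n : ℕ}
    (P₀ : Matrix (Fin n) (Fin n) ℝ) (R : Matrix (Fin m) (Fin m) ℝ)
    (H : Matrix (Fin m) (Fin n) ℝ)
    (hP₀ : P₀.PosSemidef) (hR : R.PosSemidef) (hinv : IsUnit (H * P₀ * Hᵀ + R)) :
    (P₀ - P₀ * Hᵀ * (H * P₀ * Hᵀ + R)⁻¹ * H * P₀).PosSemidef :=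
  stmt_2_general P₀ R H hP₀ hR
end

section
/- Let A be a symmetric positive semidefinite n×n real matrix with eigenvalues α₁ ≥ α₂ ≥ ⋯ ≥ αₙ ≥ 0 and a corresponding orthonormal system of eigenvectors w₁, …, wₙ (A wᵢ = αᵢ wᵢ). Then for m ≤ n, the matrix B = α₁ w₁w₁ᵀ + ⋯ + α_m w_m w_mᵀ has rank at most m and satisfies ‖A − B‖_F² = α_{m+1}² + ⋯ + αₙ², so B attains the minimum of ‖A − B‖_F² over matrices of rank at most m. -/
open Matrix

/-!
In the orthonormal eigenbasis `w`, the matrix `A - B` maps `w i` to `α i • w i` for `i ≥ m` and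
to `0` otherwise, which gives the trace identity. For minimality, a matrix `C` of rank at most
`m` kills `n - m` orthonormal vectors `x j`, so
`tr((A - C)ᵀ(A - C)) ≥ ∑ⱼ ‖(A - C) xⱼ‖² = ∑ⱼ ‖A xⱼ‖² = ∑ᵢ αᵢ² cᵢ` with `cᵢ = ∑ⱼ ⟨xⱼ, wᵢ⟩²`.
Bessel's inequality and Parseval's identity give `0 ≤ cᵢ ≤ 1` and `∑ᵢ cᵢ = n - m`, and for such
weights the weighted sum of the nonincreasing `αᵢ²` is at least the sum of the last `n - m`.
-/

namespace EckartYoung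

section Vectors

variable {ι τ : Type*} [Fintype ι]

lemma orthonormal_toLp_iff [DecidableEq τ] {x : τ → ι → ℝ} :
    Orthonormal ℝ (fun j => (WithLp.toLp 2 (x j) : EuclideanSpace ℝ ι)) ↔
      ∀ i j, x i ⬝ᵥ x j = if i = j then 1 else 0 := by
  simp [orthonormal_iff_ite, EuclideanSpace.inner_toLp_toLp, dotProduct_comm]

lemma sum_sq_dotProduct_le [Fintype τ] [DecidableEq τ] {x : τ → ι → ℝ}
    (hx : ∀ i j, x i ⬝ᵥ x j = if i = j then 1 else 0) (v : ι → ℝ) :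
    ∑ j, (v ⬝ᵥ x j) ^ 2 ≤ v ⬝ᵥ v := by
  have := (orthonormal_toLp_iff.mpr hx).sum_inner_products_le
    (WithLp.toLp 2 v : EuclideanSpace ℝ ι) (s := Finset.univ)
  rw [← real_inner_self_eq_norm_sq, EuclideanSpace.inner_toLp_toLp] at this
  simpa [EuclideanSpace.inner_toLp_toLp] using this

lemma mul_transpose_eq_one_iff [DecidableEq ι] {w : ι → ι → ℝ} :
    of w * (of w)ᵀ = 1 ↔ ∀ i j, w i ⬝ᵥ w j = if i = j then 1 else 0 := by
  simp only [← ext_iff, mul_apply, transpose_apply, of_apply, one_apply, dotProduct]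

lemma sum_sq_dotProduct_eq [DecidableEq ι] {w : ι → ι → ℝ}
    (hw : ∀ i j, w i ⬝ᵥ w j = if i = j then 1 else 0) (v : ι → ℝ) :
    ∑ i, (v ⬝ᵥ w i) ^ 2 = v ⬝ᵥ v := by
  have hW : (of w)ᵀ * of w = 1 := mul_eq_one_comm.mp (mul_transpose_eq_one_iff.mpr hw)
  calc ∑ i, (v ⬝ᵥ w i) ^ 2 = (of w *ᵥ v) ⬝ᵥ (of w *ᵥ v) := by
        simp only [sq, dotProduct_comm v]; rfl
    _ = v ⬝ᵥ v := by
        rw [dotProduct_mulVec, ← mulVec_transpose, mulVec_mulVec, hW, one_mulVec,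
          dotProduct_comm]

lemma sum_smul_vecMulVec_mulVec [DecidableEq τ] {w : τ → ι → ℝ}
    (hw : ∀ i j, w i ⬝ᵥ w j = if i = j then 1 else 0) (s : Finset τ) (a : τ → ℝ) (i : τ) :
    (∑ j ∈ s, a j • vecMulVec (w j) (w j)) *ᵥ w i = if i ∈ s then a i • w i else 0 := by
  simp [sum_mulVec, smul_mulVec, vecMulVec_mulVec, hw, op_smul_eq_smul]

lemma mulVec_dotProduct_of_isSymm {A : Matrix ι ι ℝ} (hA : A.IsSymm) {a : ℝ}
    {w : ι → ℝ} (h : A *ᵥ w = a • w) (x : ι → ℝ) : (A *ᵥ x) ⬝ᵥ w = a * (x ⬝ᵥ w) := by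
  rw [dotProduct_comm, dotProduct_mulVec, ← mulVec_transpose, hA.eq, h, smul_dotProduct,
    smul_eq_mul, dotProduct_comm]

lemma nonneg_of_posSemidef_of_mulVec_eq {A : Matrix ι ι ℝ} (hA : A.PosSemidef) {a : ℝ}
    {w : ι → ℝ} (hw : w ≠ 0) (h : A *ᵥ w = a • w) : 0 ≤ a := by
  have hpos : 0 < w ⬝ᵥ w := by simpa using dotProduct_star_self_pos_iff.2 hw
  have := hA.dotProduct_mulVec_nonneg w
  rw [h, star_trivial, dotProduct_smul, smul_eq_mul] at this
  exact nonneg_of_mul_nonneg_left this hpos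

end Vectors

section Matrices

variable {ι κ τ : Type*} [Fintype ι]

lemma rank_sum_vecMulVec_le {σ : Type*} (s : Finset σ) (u : σ → κ → ℝ) (v : σ → ι → ℝ) :
    (∑ j ∈ s, vecMulVec (u j) (v j)).rank ≤ s.card := by
  have hfactor : ∑ j ∈ s, vecMulVec (u j) (v j) =
      of (fun r (j : s) => u j r) * of (fun (j : s) c => v j c) := by
    ext r c
    simp only [Matrix.sum_apply, vecMulVec_apply, mul_apply, of_apply]
    exact (Finset.sum_coe_sort s fun j => u j r * v j c).symm
  rw [hfactor]
  exact (rank_mul_le_left _ _).trans ((rank_le_card_width _).trans_eq (Fintype.card_coe s))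

lemma exists_orthonormal_mulVec_eq_zero (C : Matrix κ ι ℝ) {k : ℕ}
    (hk : k + C.rank ≤ Fintype.card ι) :
    ∃ x : Fin k → ι → ℝ,
      (∀ i j, x i ⬝ᵥ x j = if i = j then 1 else 0) ∧ ∀ j, C *ᵥ x j = 0 := by
  let L := C.mulVecLin ∘ₗ (WithLp.linearEquiv 2 ℝ (ι → ℝ)).toLinearMap
  have hrange : Module.finrank ℝ (LinearMap.range L) = C.rank := by
    rw [LinearMap.range_comp_of_range_eq_top _ (LinearEquiv.range _)]
    rfl
  have hker : k ≤ Module.finrank ℝ (LinearMap.ker L) := by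
    have := L.finrank_range_add_finrank_ker
    rw [hrange, finrank_euclideanSpace] at this
    omega
  let b := stdOrthonormalBasis ℝ (LinearMap.ker L)
  refine ⟨fun j => WithLp.ofLp (b (Fin.castLE hker j) : EuclideanSpace ℝ ι), ?_, ?_⟩
  · rw [← orthonormal_toLp_iff]
    exact (b.orthonormal.comp _ (Fin.castLE_injective hker)).comp_linearIsometry
      (LinearMap.ker L).subtypeₗᵢ
  · exact fun j => (b (Fin.castLE hker j)).2

variable [Fintype κ]

lemma trace_transpose_mul_self (M : Matrix κ ι ℝ) :
    trace (Mᵀ * M) = ∑ r, M r ⬝ᵥ M r := by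
  simp only [trace, diag_apply, mul_apply, transpose_apply, dotProduct]
  exact Finset.sum_comm

lemma mulVec_dotProduct_mulVec_self (M : Matrix κ ι ℝ) (x : ι → ℝ) :
    (M *ᵥ x) ⬝ᵥ (M *ᵥ x) = ∑ r, (M r ⬝ᵥ x) ^ 2 := by
  simp only [dotProduct, mulVec, sq]

lemma sum_mulVec_dotProduct_self_le_trace [Fintype τ] [DecidableEq τ] (M : Matrix κ ι ℝ)
    {x : τ → ι → ℝ} (hx : ∀ i j, x i ⬝ᵥ x j = if i = j then 1 else 0) :
    ∑ j, (M *ᵥ x j) ⬝ᵥ (M *ᵥ x j) ≤ trace (Mᵀ * M) := by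
  simp only [mulVec_dotProduct_mulVec_self, trace_transpose_mul_self]
  rw [Finset.sum_comm]
  exact Finset.sum_le_sum fun r _ => sum_sq_dotProduct_le hx (M r)

lemma sum_mulVec_dotProduct_self_eq_trace [DecidableEq ι] (M : Matrix κ ι ℝ)
    {w : ι → ι → ℝ} (hw : ∀ i j, w i ⬝ᵥ w j = if i = j then 1 else 0) :
    ∑ i, (M *ᵥ w i) ⬝ᵥ (M *ᵥ w i) = trace (Mᵀ * M) := by
  simp only [mulVec_dotProduct_mulVec_self, trace_transpose_mul_self]
  rw [Finset.sum_comm]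
  exact Finset.sum_congr rfl fun r _ => sum_sq_dotProduct_eq hw (M r)

end Matrices

lemma sum_le_sum_mul_of_threshold {σ : Type*} [Fintype σ] [DecidableEq σ] (S : Finset σ)
    (β c : σ → ℝ) (t : ℝ) (hS : ∀ i ∈ S, β i ≤ t) (hSc : ∀ i ∉ S, t ≤ β i)
    (hc0 : ∀ i, 0 ≤ c i) (hc1 : ∀ i, c i ≤ 1) (hc : ∑ i, c i = S.card) :
    ∑ i ∈ S, β i ≤ ∑ i, β i * c i := by
  have hin : ∑ i ∈ S, β i * (1 - c i) ≤ ∑ i ∈ S, t * (1 - c i) :=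
    Finset.sum_le_sum fun i hi => mul_le_mul_of_nonneg_right (hS i hi) (sub_nonneg.2 (hc1 i))
  have hout : ∑ i ∈ Sᶜ, t * c i ≤ ∑ i ∈ Sᶜ, β i * c i :=
    Finset.sum_le_sum fun i hi =>
      mul_le_mul_of_nonneg_right (hSc i (Finset.mem_compl.1 hi)) (hc0 i)
  have hsplit : t * ∑ i ∈ S, c i + t * ∑ i ∈ Sᶜ, c i = t * S.card := by
    rw [← mul_add, Finset.sum_add_sum_compl, hc]
  simp only [mul_sub, mul_one, Finset.sum_sub_distrib, ← Finset.mul_sum, Finset.sum_const,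
    nsmul_eq_mul] at hin hout
  linarith [Finset.sum_add_sum_compl S fun i => β i * c i]

lemma exists_threshold_of_antitone {n : ℕ} {β : Fin n → ℝ} (hβ : Antitone β) (m : ℕ) :
    ∃ t, (∀ i : Fin n, m ≤ (i : ℕ) → β i ≤ t) ∧ ∀ i : Fin n, (i : ℕ) < m → t ≤ β i := by
  by_cases hm : m < n
  · exact ⟨β ⟨m, hm⟩, fun i hi => hβ (Fin.le_def.2 hi), fun i hi => hβ (Fin.le_def.2 hi.le)⟩
  · exact ⟨⨅ i, β i, fun i hi => absurd (hi.trans_lt i.2) hm,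
      fun i _ => ciInf_le (Set.finite_range β).bddBelow i⟩

lemma card_filter_le_val (n m : ℕ) :
    (Finset.univ.filter fun i : Fin n => m ≤ (i : ℕ)).card = n - m := by
  have := Finset.card_filter_add_card_filter_not (s := Finset.univ) (fun i : Fin n => (i : ℕ) < m)
  simp only [not_lt, Fin.card_filter_val_lt, Finset.card_univ, Fintype.card_fin] at this
  omega

section Eigenbasis

variable {ι τ : Type*} [Fintype ι] [DecidableEq ι] {A : Matrix ι ι ℝ} {α : ι → ℝ}
  {w : ι → ι → ℝ}

lemma mulVec_dotProduct_mulVec_self_of_isSymm (hA : A.IsSymm)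
    (hw : ∀ i j, w i ⬝ᵥ w j = if i = j then 1 else 0) (heig : ∀ i, A *ᵥ w i = α i • w i)
    (x : ι → ℝ) :
    (A *ᵥ x) ⬝ᵥ (A *ᵥ x) = ∑ i, α i ^ 2 * (x ⬝ᵥ w i) ^ 2 := by
  rw [← sum_sq_dotProduct_eq hw]
  simp only [mulVec_dotProduct_of_isSymm hA (heig _), mul_pow]

lemma trace_sub_sum_smul_vecMulVec (hw : ∀ i j, w i ⬝ᵥ w j = if i = j then 1 else 0)
    (heig : ∀ i, A *ᵥ w i = α i • w i) (s : Finset ι) :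
    trace ((A - ∑ i ∈ s, α i • vecMulVec (w i) (w i))ᵀ *
      (A - ∑ i ∈ s, α i • vecMulVec (w i) (w i))) = ∑ i ∈ sᶜ, α i ^ 2 := by
  have hmulVec : ∀ i, (A - ∑ i ∈ s, α i • vecMulVec (w i) (w i)) *ᵥ w i =
      if i ∈ s then 0 else α i • w i := by
    intro i
    by_cases hi : i ∈ s <;> simp [sub_mulVec, heig, sum_smul_vecMulVec_mulVec hw, hi]
  rw [← sum_mulVec_dotProduct_self_eq_trace _ hw, ← Finset.univ_inter sᶜ, ← Finset.sum_ite_mem]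
  refine Finset.sum_congr rfl fun i _ => ?_
  by_cases hi : i ∈ s <;> simp [hmulVec, hi, hw, sq]

lemma sum_sq_le_sum_mulVec_dotProduct_self [Fintype τ] [DecidableEq τ] (hA : A.IsSymm)
    (hw : ∀ i j, w i ⬝ᵥ w j = if i = j then 1 else 0) (heig : ∀ i, A *ᵥ w i = α i • w i)
    {x : τ → ι → ℝ} (hx : ∀ i j, x i ⬝ᵥ x j = if i = j then 1 else 0)
    (S : Finset ι) (hS : S.card = Fintype.card τ) (t : ℝ)
    (hSt : ∀ i ∈ S, α i ^ 2 ≤ t) (hSct : ∀ i ∉ S, t ≤ α i ^ 2) :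
    ∑ i ∈ S, α i ^ 2 ≤ ∑ j, (A *ᵥ x j) ⬝ᵥ (A *ᵥ x j) := by
  set c : ι → ℝ := fun i => ∑ j, (x j ⬝ᵥ w i) ^ 2
  have hc0 : ∀ i, 0 ≤ c i := fun i => Finset.sum_nonneg fun j _ => sq_nonneg _
  have hc1 : ∀ i, c i ≤ 1 := fun i => by
    simpa [c, dotProduct_comm (x _), hw] using sum_sq_dotProduct_le hx (w i)
  have hc : ∑ i, c i = S.card := by
    simp only [c, hS]
    rw [Finset.sum_comm]
    simp [sum_sq_dotProduct_eq hw, hx]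
  calc ∑ i ∈ S, α i ^ 2 ≤ ∑ i, α i ^ 2 * c i :=
        sum_le_sum_mul_of_threshold S _ c t hSt hSct hc0 hc1 hc
    _ = ∑ j, (A *ᵥ x j) ⬝ᵥ (A *ᵥ x j) := by
        simp only [c, mulVec_dotProduct_mulVec_self_of_isSymm hA hw heig, Finset.mul_sum]
        exact Finset.sum_comm

end Eigenbasis

end EckartYoung

open EckartYoung

theorem stmt_5_general {n m : ℕ}
    (A : Matrix (Fin n) (Fin n) ℝ) (hA : A.PosSemidef)
    (α : Fin n → ℝ) (hα : Antitone α)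
    (w : Fin n → Fin n → ℝ)
    (hortho : ∀ i j, w i ⬝ᵥ w j = if i = j then (1 : ℝ) else 0)
    (heig : ∀ i, A *ᵥ w i = α i • w i)
    (B : Matrix (Fin n) (Fin n) ℝ)
    (hB : B = ∑ i ∈ Finset.univ.filter (fun i : Fin n => (i : ℕ) < m),
      α i • Matrix.vecMulVec (w i) (w i)) :
    B.rank ≤ m ∧
      Matrix.trace ((A - B)ᵀ * (A - B)) =
        ∑ i ∈ Finset.univ.filter (fun i : Fin n => m ≤ (i : ℕ)), (α i) ^ 2 ∧
      ∀ C : Matrix (Fin n) (Fin n) ℝ, C.rank ≤ m →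
        Matrix.trace ((A - B)ᵀ * (A - B)) ≤ Matrix.trace ((A - C)ᵀ * (A - C)) := by
  have htrace : trace ((A - B)ᵀ * (A - B)) =
      ∑ i ∈ Finset.univ.filter (fun i : Fin n => m ≤ (i : ℕ)), α i ^ 2 := by
    simp only [hB, trace_sub_sum_smul_vecMulVec hortho heig, Finset.compl_filter, not_lt]
  refine ⟨?_, htrace, fun C hC => ?_⟩
  · calc B.rank ≤ (Finset.univ.filter fun i : Fin n => (i : ℕ) < m).card := by
          simpa only [hB, smul_vecMulVec] using rank_sum_vecMulVec_le _ (fun i => α i • w i) w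
      _ ≤ m := Fin.card_filter_val_lt.trans_le (min_le_right _ _)
  obtain ⟨x, hx, hCx⟩ := exists_orthonormal_mulVec_eq_zero C (k := n - m)
    (by rw [Fintype.card_fin]; have := C.rank_le_width; omega)
  have hα0 : ∀ i, 0 ≤ α i := fun i =>
    nonneg_of_posSemidef_of_mulVec_eq hA (fun h => by simpa [h] using hortho i i) (heig i)
  obtain ⟨t, hle, hge⟩ := exists_threshold_of_antitone
    (fun i j hij => pow_le_pow_left₀ (hα0 j) (hα hij) 2 : Antitone fun i => α i ^ 2) m
  calc trace ((A - B)ᵀ * (A - B))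
      = ∑ i ∈ Finset.univ.filter (fun i : Fin n => m ≤ (i : ℕ)), α i ^ 2 := htrace
    _ ≤ ∑ j, (A *ᵥ x j) ⬝ᵥ (A *ᵥ x j) :=
        sum_sq_le_sum_mulVec_dotProduct_self (isHermitian_iff_isSymm.mp hA.isHermitian) hortho
          heig hx _ (by simp [card_filter_le_val]) t (by simpa using hle) (by simpa using hge)
    _ = ∑ j, ((A - C) *ᵥ x j) ⬝ᵥ ((A - C) *ᵥ x j) := by simp [sub_mulVec, hCx]
    _ ≤ trace ((A - C)ᵀ * (A - C)) := sum_mulVec_dotProduct_self_le_trace _ hx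

/-- Attainment in the Eckart–Young type theorem (Rao): if `A` is symmetric positive
semidefinite with eigenvalues `α 0 ≥ ⋯ ≥ α (n-1) ≥ 0` and corresponding orthonormal
eigenvectors `w i`, then `B = ∑_{i < m} α i • w i w iᵀ` has rank at most `m`, satisfies
`‖A − B‖_F² = tr((A−B)ᵀ(A−B)) = ∑_{i ≥ m} (α i)²`, and attains the minimum of
`‖A − C‖_F²` over matrices `C` of rank at most `m`. -/
theorem stmt_5 {n m : ℕ} (hmn : m ≤ n)
    (A : Matrix (Fin n) (Fin n) ℝ) (hA : A.PosSemidef)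
    (α : Fin n → ℝ) (hα : Antitone α)
    (w : Fin n → Fin n → ℝ)
    (hortho : ∀ i j, w i ⬝ᵥ w j = if i = j then (1 : ℝ) else 0)
    (heig : ∀ i, A *ᵥ w i = α i • w i)
    (B : Matrix (Fin n) (Fin n) ℝ)
    (hB : B = ∑ i ∈ Finset.univ.filter (fun i : Fin n => (i : ℕ) < m),
      α i • Matrix.vecMulVec (w i) (w i)) :
    B.rank ≤ m ∧
      Matrix.trace ((A - B)ᵀ * (A - B)) =
        ∑ i ∈ Finset.univ.filter (fun i : Fin n => m ≤ (i : ℕ)), (α i) ^ 2 ∧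
      ∀ C : Matrix (Fin n) (Fin n) ℝ, C.rank ≤ m →
        Matrix.trace ((A - B)ᵀ * (A - B)) ≤ Matrix.trace ((A - C)ᵀ * (A - C)) :=
  stmt_5_general A hA α hα w hortho heig B hB
end

section
/- Let P₀ be a symmetric positive semidefinite n×n real matrix with eigenvalues σ₁ ≥ ⋯ ≥ σₙ ≥ 0 and orthonormal eigenvectors u₁, …, uₙ, let m < n with σ₁, …, σ_m > 0, and let H be the m×n matrix whose i-th row is uᵢᵀ for i = 1, …, m. Then H P₀ Hᵀ is invertible, P₀ − P₀ Hᵀ (H P₀ Hᵀ)⁻¹ H P₀ = σ_{m+1} u_{m+1}u_{m+1}ᵀ + ⋯ + σₙ uₙuₙᵀ, and ‖P₀ − P₀ Hᵀ (H P₀ Hᵀ)⁻¹ H P₀‖_F² = σ_{m+1}² + ⋯ + σₙ². -/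
open Matrix

section Aux

variable {n : ℕ}

lemma aux_trace_vmv (a b c d : Fin n → ℝ) :
    Matrix.trace (Matrix.vecMulVec a b * Matrix.vecMulVec c d) =
      (b ⬝ᵥ c) * (d ⬝ᵥ a) := by
  simp only [Matrix.trace, Matrix.diag_apply, Matrix.mul_apply, Matrix.vecMulVec_apply,
    dotProduct, Finset.sum_mul_sum]
  rw [Finset.sum_comm]
  refine Finset.sum_congr rfl fun i _ => ?_
  refine Finset.sum_congr rfl fun k _ => ?_
  ring

lemma aux_vmv_transpose (a : Fin n → ℝ) :
    (Matrix.vecMulVec a a)ᵀ = Matrix.vecMulVec a a := by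
  ext i j
  simp [Matrix.vecMulVec_apply, mul_comm]

end Aux

/-- Optimal noiseless continuous sensing design: if the rows of `H` are the first `m`
principal components of `P₀` (eigenvectors `u i` for eigenvalues `σ 0 ≥ ⋯ ≥ σ (n-1) ≥ 0`,
with `σ i > 0` for `i < m`), then `H P₀ Hᵀ` is invertible, the a posteriori covariance
`P₀ − P₀ Hᵀ (H P₀ Hᵀ)⁻¹ H P₀` equals the spectral tail `∑_{i ≥ m} σ i • u i u iᵀ`, and its
squared Frobenius norm `tr(P_pᵀ P_p)` equals `∑_{i ≥ m} (σ i)²`. -/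
theorem stmt_6 {n m : ℕ} (hmn : m < n)
    (P₀ : Matrix (Fin n) (Fin n) ℝ) (hP₀ : P₀.PosSemidef)
    (σ : Fin n → ℝ) (hσ : Antitone σ) (hσ0 : ∀ i : Fin n, 0 ≤ σ i)
    (hσpos : ∀ i : Fin n, (i : ℕ) < m → 0 < σ i)
    (u : Fin n → Fin n → ℝ)
    (hortho : ∀ i j, u i ⬝ᵥ u j = if i = j then (1 : ℝ) else 0)
    (heig : ∀ i, P₀ *ᵥ u i = σ i • u i)
    (H : Matrix (Fin m) (Fin n) ℝ)
    (hH : H = Matrix.of fun (i : Fin m) (j : Fin n) => u (Fin.castLE hmn.le i) j) :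
    IsUnit (H * P₀ * Hᵀ) ∧
      P₀ - P₀ * Hᵀ * (H * P₀ * Hᵀ)⁻¹ * H * P₀ =
        ∑ i ∈ Finset.univ.filter (fun i : Fin n => m ≤ (i : ℕ)),
          σ i • Matrix.vecMulVec (u i) (u i) ∧
      Matrix.trace ((P₀ - P₀ * Hᵀ * (H * P₀ * Hᵀ)⁻¹ * H * P₀)ᵀ *
          (P₀ - P₀ * Hᵀ * (H * P₀ * Hᵀ)⁻¹ * H * P₀)) =
        ∑ i ∈ Finset.univ.filter (fun i : Fin n => m ≤ (i : ℕ)), (σ i) ^ 2 := by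
  have hPu : ∀ (j : Fin n) (i : Fin n), (∑ k, P₀ i k * u j k) = σ j * u j i := by
    intro j i
    have := congrFun (heig j) i
    simpa [Matrix.mulVec, dotProduct, smul_eq_mul] using this
  have hsymm : ∀ a b, P₀ a b = P₀ b a := by
    intro a b
    have := congrFun (congrFun hP₀.1.eq b) a
    simpa [Matrix.conjTranspose_apply] using this
  set D : Matrix (Fin m) (Fin m) ℝ :=
    Matrix.diagonal (fun i : Fin m => σ (Fin.castLE hmn.le i)) with hD
  -- P₀ * Hᵀ = Hᵀ * D
  have hP0HT : P₀ * Hᵀ = Hᵀ * D := by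
    subst hH
    ext i j
    simp only [Matrix.mul_apply, Matrix.transpose_apply, Matrix.of_apply, hD,
      Matrix.diagonal_apply, mul_ite, mul_zero]
    rw [Finset.sum_ite_eq' Finset.univ j]
    simp [hPu (Fin.castLE hmn.le j) i, mul_comm]
  -- H * Hᵀ = 1
  have hHHT : H * Hᵀ = 1 := by
    subst hH
    ext i j
    have := hortho (Fin.castLE hmn.le i) (Fin.castLE hmn.le j)
    simp only [dotProduct] at this
    simp only [Matrix.mul_apply, Matrix.transpose_apply, Matrix.of_apply, Matrix.one_apply, this]
    congr 1
    simp [Fin.castLE_inj]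
  have hHPH : H * P₀ * Hᵀ = D := by
    rw [Matrix.mul_assoc, hP0HT, ← Matrix.mul_assoc, hHHT, Matrix.one_mul]
  have hDet : IsUnit D.det := by
    rw [hD, Matrix.det_diagonal]
    refine isUnit_iff_ne_zero.2 (Finset.prod_ne_zero_iff.2 fun i _ => ?_)
    exact (hσpos _ (by simpa using i.2)).ne'
  have hUnit : IsUnit (H * P₀ * Hᵀ) := by
    rw [hHPH]
    exact (Matrix.isUnit_iff_isUnit_det _).2 hDet
  have hDDinv : D * D⁻¹ = 1 := Matrix.mul_nonsing_inv _ hDet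
  have h1 : P₀ * Hᵀ * (H * P₀ * Hᵀ)⁻¹ * H * P₀ = Hᵀ * H * P₀ := by
    rw [hP0HT, hHPH, Matrix.mul_assoc Hᵀ D D⁻¹, hDDinv, Matrix.mul_one]
  -- orthogonality of full eigenbasis
  have hU : (Matrix.of u) * (Matrix.of u)ᵀ = 1 := by
    ext i j
    have := hortho i j
    simp only [dotProduct] at this
    simp [Matrix.mul_apply, Matrix.one_apply, this]
  have hU' : (Matrix.of u)ᵀ * (Matrix.of u) = 1 := mul_eq_one_comm.mp hU
  -- spectral decomposition of P₀
  have hspec : P₀ = ∑ j, σ j • Matrix.vecMulVec (u j) (u j) := by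
    have h2 : P₀ * (Matrix.of u)ᵀ * Matrix.of u = P₀ := by
      rw [Matrix.mul_assoc, hU', Matrix.mul_one]
    ext i k
    have h3 := congrFun (congrFun h2 i) k
    rw [show P₀ i k = (P₀ * (Matrix.of u)ᵀ * Matrix.of u) i k from h3.symm]
    simp only [Matrix.mul_apply, Matrix.transpose_apply, Matrix.of_apply,
      Matrix.sum_apply, Matrix.smul_apply, Matrix.vecMulVec_apply, smul_eq_mul]
    refine Finset.sum_congr rfl fun j _ => ?_
    rw [hPu j i]
    ring
  -- Hᵀ * H * P₀ as a head sum
  have hHtHP : Hᵀ * H * P₀ =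
      ∑ j : Fin m, σ (Fin.castLE hmn.le j) •
        Matrix.vecMulVec (u (Fin.castLE hmn.le j)) (u (Fin.castLE hmn.le j)) := by
    subst hH
    ext i k
    simp only [Matrix.mul_apply, Matrix.transpose_apply, Matrix.of_apply,
      Matrix.sum_apply, Matrix.smul_apply, Matrix.vecMulVec_apply, smul_eq_mul,
      Finset.sum_mul]
    rw [Finset.sum_comm]
    refine Finset.sum_congr rfl fun j _ => ?_
    have : (∑ l, u (Fin.castLE hmn.le j) i * u (Fin.castLE hmn.le j) l * P₀ l k)
        = u (Fin.castLE hmn.le j) i * ∑ l, P₀ k l * u (Fin.castLE hmn.le j) l := by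
      rw [Finset.mul_sum]
      refine Finset.sum_congr rfl fun l _ => ?_
      rw [hsymm k l]; ring
    rw [this, hPu (Fin.castLE hmn.le j) k]
    ring
  -- reindex the head sum over the filter
  have himg : Finset.univ.filter (fun i : Fin n => (i : ℕ) < m) =
      Finset.map (Fin.castLEEmb hmn.le) Finset.univ := by
    ext i
    simp only [Finset.mem_filter, Finset.mem_univ, true_and, Finset.mem_map,
      Fin.castLEEmb_apply]
    constructor
    · intro h
      exact ⟨⟨(i : ℕ), h⟩, by ext; simp⟩
    · rintro ⟨j, rfl⟩
      exact j.2
  have hhead : Hᵀ * H * P₀ =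
      ∑ i ∈ Finset.univ.filter (fun i : Fin n => (i : ℕ) < m),
        σ i • Matrix.vecMulVec (u i) (u i) := by
    rw [hHtHP, himg, Finset.sum_map]
    rfl
  -- the tail identity
  have htail : P₀ - P₀ * Hᵀ * (H * P₀ * Hᵀ)⁻¹ * H * P₀ =
      ∑ i ∈ Finset.univ.filter (fun i : Fin n => m ≤ (i : ℕ)),
        σ i • Matrix.vecMulVec (u i) (u i) := by
    rw [h1, hhead, hspec]
    rw [← Finset.sum_filter_add_sum_filter_not Finset.univ (fun i : Fin n => (i : ℕ) < m)]
    have : Finset.univ.filter (fun i : Fin n => ¬ (i : ℕ) < m) =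
        Finset.univ.filter (fun i : Fin n => m ≤ (i : ℕ)) := by
      simp [not_lt]
    rw [this]
    abel
  refine ⟨hUnit, htail, ?_⟩
  rw [htail]
  have htr : ∀ i j : Fin n,
      Matrix.trace (Matrix.vecMulVec (u i) (u i) * Matrix.vecMulVec (u j) (u j)) =
        if i = j then (1 : ℝ) else 0 := by
    intro i j
    rw [aux_trace_vmv]
    have h1 := hortho i j
    have h2 := hortho j i
    rw [h1, h2]
    by_cases h : i = j
    · simp [h]
    · simp [h, fun hji : j = i => h hji.symm]
  have hTt : (∑ i ∈ Finset.univ.filter (fun i : Fin n => m ≤ (i : ℕ)),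
      σ i • Matrix.vecMulVec (u i) (u i))ᵀ =
      ∑ i ∈ Finset.univ.filter (fun i : Fin n => m ≤ (i : ℕ)),
        σ i • Matrix.vecMulVec (u i) (u i) := by
    rw [Matrix.transpose_sum]
    refine Finset.sum_congr rfl fun i _ => ?_
    rw [Matrix.transpose_smul, aux_vmv_transpose]
  rw [hTt, Finset.sum_mul_sum]
  rw [Matrix.trace_sum]
  refine Finset.sum_congr rfl fun i hi => ?_
  rw [Matrix.trace_sum]
  rw [Finset.sum_eq_single i]
  · rw [Matrix.smul_mul, Matrix.mul_smul, Matrix.trace_smul, Matrix.trace_smul, htr]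
    simp [pow_two]
  · intro j _ hj
    rw [Matrix.smul_mul, Matrix.mul_smul, Matrix.trace_smul, Matrix.trace_smul, htr,
      if_neg (fun h : i = j => hj h.symm)]
    simp
  · intro h
    exact absurd hi h
end

section
/- Let P₀ be a symmetric positive semidefinite n×n real matrix with eigenvalues σ₁ ≥ ⋯ ≥ σₙ ≥ 0, and let H be any m×n real matrix (m < n) such that H P₀ Hᵀ is invertible. Then ‖P₀ − P₀ Hᵀ (H P₀ Hᵀ)⁻¹ H P₀‖_F² ≥ σ_{m+1}² + ⋯ + σₙ². -/
/-!
Let `v₁, …, v_k` be an orthonormal basis of `ker (H P₀)`, so `k ≥ n - m`. The posterior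
covariance `P_p` agrees with `P₀` on this kernel, hence by Bessel's inequality applied to the rows
of `P_p`, `‖P_p‖_F² ≥ ∑ⱼ ‖P₀ vⱼ‖² = ∑ᵢ σᵢ² tᵢ` with weights `tᵢ = ∑ⱼ ⟨uᵢ, vⱼ⟩²`. Bessel and
Parseval give `0 ≤ tᵢ ≤ 1` and `∑ᵢ tᵢ = k`, and among such weightings of the decreasing sequence
`σᵢ²` the smallest sum puts weight `1` on the last `n - m` terms.
-/

open Matrix Finset

theorem Finset.sum_le_sum_mul_of_card_le_sum {ι : Type*} [Fintype ι] [DecidableEq ι]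
    (s : Finset ι) {c t : ι → ℝ} {θ : ℝ} (hθ : 0 ≤ θ) (hs : ∀ i ∈ s, c i ≤ θ)
    (hsc : ∀ i ∉ s, θ ≤ c i) (ht0 : ∀ i, 0 ≤ t i) (ht1 : ∀ i, t i ≤ 1)
    (hcard : (#s : ℝ) ≤ ∑ i, t i) :
    ∑ i ∈ s, c i ≤ ∑ i, c i * t i := by
  calc ∑ i ∈ s, c i = ∑ i ∈ s, c i * t i + ∑ i ∈ s, c i * (1 - t i) := by
        rw [← Finset.sum_add_distrib]; simp only [mul_sub, mul_one, add_sub_cancel]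
    _ ≤ ∑ i ∈ s, c i * t i + ∑ i ∈ s, θ * (1 - t i) := by
        gcongr with i hi
        · linarith [ht1 i]
        · exact hs i hi
    _ = ∑ i ∈ s, c i * t i + θ * (#s - ∑ i ∈ s, t i) := by
        rw [← Finset.mul_sum, Finset.sum_sub_distrib, Finset.sum_const, nsmul_one]
    _ ≤ ∑ i ∈ s, c i * t i + ∑ i ∈ sᶜ, θ * t i := by
        rw [← Finset.mul_sum]; gcongr; linarith [Finset.sum_add_sum_compl s t]
    _ ≤ ∑ i ∈ s, c i * t i + ∑ i ∈ sᶜ, c i * t i := by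
        gcongr with i hi
        · exact ht0 i
        · exact hsc i (Finset.mem_compl.mp hi)
    _ = ∑ i, c i * t i := Finset.sum_add_sum_compl s _

theorem Fin.sum_filter_le_le_sum_mul_of_antitone {n m : ℕ} (hmn : m < n) {c t : Fin n → ℝ}
    (hc : Antitone c) (hc0 : ∀ i, 0 ≤ c i) (ht0 : ∀ i, 0 ≤ t i) (ht1 : ∀ i, t i ≤ 1)
    (hsum : ((n - m : ℕ) : ℝ) ≤ ∑ i, t i) :
    ∑ i ∈ univ.filter (fun i : Fin n => m ≤ (i : ℕ)), c i ≤ ∑ i, c i * t i := by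
  refine Finset.sum_le_sum_mul_of_card_le_sum _ (hc0 ⟨m, hmn⟩) (fun i hi => hc ?_)
    (fun i hi => hc ?_) ht0 ht1 ?_
  · simpa [Fin.le_def] using hi
  · simp only [Finset.mem_filter, Finset.mem_univ, true_and, not_le] at hi
    exact Fin.le_def.mpr hi.le
  · have hIci : univ.filter (fun i : Fin n => m ≤ (i : ℕ)) = Finset.Ici ⟨m, hmn⟩ := by
      ext i; simp [Fin.le_def]
    rwa [hIci, Fin.card_Ici]

namespace Matrix

variable {l m n : Type*} [Fintype l] [Fintype m] [Fintype n]

theorem trace_transpose_mul_self_eq_sum_dotProduct {R : Type*} [CommRing R]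
    (X : Matrix m n R) : (Xᵀ * X).trace = ∑ i, X i ⬝ᵥ X i := by
  rw [trace_mul_comm]
  rfl

omit [Fintype m] [Fintype l] in
theorem mul_transpose_row {R : Type*} [CommRing R] (A : Matrix m n R) (V : Matrix l n R)
    (i : m) : (A * Vᵀ) i = V *ᵥ A i := by
  ext j
  simp only [mul_apply, transpose_apply, mulVec, dotProduct, mul_comm]

theorem eq_transpose_mul_diagonal_mul_of_mulVec_eq_smul {R : Type*} [CommRing R]
    [DecidableEq n] {P U : Matrix n n R} {σ : n → R} (hU : U * Uᵀ = 1)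
    (h : ∀ i, P *ᵥ U i = σ i • U i) : P = Uᵀ * diagonal σ * U := by
  have hPU : P * Uᵀ = Uᵀ * diagonal σ := by
    ext i j
    have hji := congrFun (h j) i
    simp only [mulVec, dotProduct, Pi.smul_apply, smul_eq_mul] at hji
    rw [mul_diagonal, mul_apply]
    simp only [transpose_apply]
    rw [hji, mul_comm]
  calc P = P * (Uᵀ * U) := by rw [mul_eq_one_comm.mp hU, Matrix.mul_one]
    _ = Uᵀ * diagonal σ * U := by rw [← Matrix.mul_assoc, hPU]

theorem exists_orthonormal_rows_mul_transpose_eq_zero [DecidableEq n] (B : Matrix m n ℝ) :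
    ∃ k, Fintype.card n - Fintype.card m ≤ k ∧
      ∃ V : Matrix (Fin k) n ℝ, V * Vᵀ = 1 ∧ B * Vᵀ = 0 := by
  let K := LinearMap.ker (toEuclideanLin B)
  refine ⟨Module.finrank ℝ K, ?_, ?_⟩
  · have hrank : Module.finrank ℝ (LinearMap.range (toEuclideanLin B)) + Module.finrank ℝ K
        = Fintype.card n := by
      rw [LinearMap.finrank_range_add_finrank_ker, finrank_euclideanSpace]
    have hrange := Submodule.finrank_le (LinearMap.range (toEuclideanLin B))
    rw [finrank_euclideanSpace] at hrange
    omega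
  · let b := stdOrthonormalBasis ℝ K
    refine ⟨of fun j r => (b j : EuclideanSpace ℝ n) r, ?_, ?_⟩
    · ext i j
      have hij := orthonormal_iff_ite.mp b.orthonormal i j
      rw [Submodule.coe_inner, EuclideanSpace.inner_eq_star_dotProduct] at hij
      rw [mul_apply, one_apply, ← hij]
      simp only [of_apply, transpose_apply, dotProduct, star_trivial]
      exact Finset.sum_congr rfl fun r _ => mul_comm _ _
    · ext i j
      have hker : B *ᵥ (b j : EuclideanSpace ℝ n).ofLp = 0 := congrArg WithLp.ofLp (b j).2
      simpa [mul_apply, mulVec, dotProduct] using congrFun hker i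

omit [Fintype n] in
theorem transpose_mul_self_mul_left_of_transpose_mul_eq_one {R : Type*} [CommRing R]
    [DecidableEq m] {Q : Matrix m m R} (hQ : Qᵀ * Q = 1) (X : Matrix m n R) :
    (Q * X)ᵀ * (Q * X) = Xᵀ * X := by
  rw [transpose_mul, Matrix.mul_assoc, ← Matrix.mul_assoc Qᵀ, hQ, Matrix.one_mul]

theorem dotProduct_mulVec_self_le_of_mul_transpose_eq_one [DecidableEq m] {V : Matrix m n ℝ}
    (hV : V * Vᵀ = 1) (x : n → ℝ) : (V *ᵥ x) ⬝ᵥ (V *ᵥ x) ≤ x ⬝ᵥ x := by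
  have hproj : (Vᵀ *ᵥ (V *ᵥ x)) ⬝ᵥ (Vᵀ *ᵥ (V *ᵥ x)) = (V *ᵥ x) ⬝ᵥ (V *ᵥ x) := by
    rw [dotProduct_mulVec, vecMul_transpose, mulVec_mulVec, hV, one_mulVec]
  have hcross : x ⬝ᵥ (Vᵀ *ᵥ (V *ᵥ x)) = (V *ᵥ x) ⬝ᵥ (V *ᵥ x) := by
    rw [dotProduct_mulVec, vecMul_transpose, dotProduct_comm]
  -- `‖x - VᵀV x‖² = ‖x‖² - ‖V x‖²`
  have hres := dotProduct_self_star_nonneg (x - Vᵀ *ᵥ (V *ᵥ x))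
  simp only [star_trivial, sub_dotProduct, dotProduct_sub, hproj, hcross,
    dotProduct_comm (Vᵀ *ᵥ (V *ᵥ x)) x] at hres
  linarith

theorem trace_transpose_mul_self_mul_transpose_le [DecidableEq l] {V : Matrix l n ℝ}
    (hV : V * Vᵀ = 1) (A : Matrix m n ℝ) :
    ((A * Vᵀ)ᵀ * (A * Vᵀ)).trace ≤ (Aᵀ * A).trace := by
  simp only [trace_transpose_mul_self_eq_sum_dotProduct, mul_transpose_row]
  exact Finset.sum_le_sum fun i _ => dotProduct_mulVec_self_le_of_mul_transpose_eq_one hV _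

end Matrix

theorem Matrix.sum_filter_sq_le_trace_of_mul_transpose_eq_one {n m k : ℕ} (hmn : m < n)
    {σ : Fin n → ℝ} (hσ : Antitone σ) (hσ0 : ∀ i, 0 ≤ σ i)
    {U : Matrix (Fin n) (Fin n) ℝ} (hU : U * Uᵀ = 1)
    {V : Matrix (Fin k) (Fin n) ℝ} (hV : V * Vᵀ = 1) (hk : n - m ≤ k) :
    ∑ i ∈ univ.filter (fun i : Fin n => m ≤ (i : ℕ)), σ i ^ 2 ≤
      ((Uᵀ * diagonal σ * U * Vᵀ)ᵀ * (Uᵀ * diagonal σ * U * Vᵀ)).trace := by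
  have hweight : ∀ i, (U * Vᵀ) i ⬝ᵥ (U * Vᵀ) i ≤ 1 := fun i => by
    have hUi : U i ⬝ᵥ U i = 1 := by
      simpa [mul_apply, dotProduct] using congrFun (congrFun hU i) i
    rw [mul_transpose_row, ← hUi]
    exact dotProduct_mulVec_self_le_of_mul_transpose_eq_one hV (U i)
  have hweights : ∑ i, (U * Vᵀ) i ⬝ᵥ (U * Vᵀ) i = k := by
    rw [← trace_transpose_mul_self_eq_sum_dotProduct,
      transpose_mul_self_mul_left_of_transpose_mul_eq_one (mul_eq_one_comm.mp hU),
      transpose_transpose, hV, trace_one, Fintype.card_fin]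
  calc ∑ i ∈ univ.filter (fun i : Fin n => m ≤ (i : ℕ)), σ i ^ 2
      ≤ ∑ i, σ i ^ 2 * ((U * Vᵀ) i ⬝ᵥ (U * Vᵀ) i) :=
        Fin.sum_filter_le_le_sum_mul_of_antitone hmn
          (fun i j hij => pow_le_pow_left₀ (hσ0 j) (hσ hij) 2) (fun i => sq_nonneg _)
          (fun i => dotProduct_self_star_nonneg _) hweight
          (by rw [hweights]; exact_mod_cast hk)
    _ = ((diagonal σ * (U * Vᵀ))ᵀ * (diagonal σ * (U * Vᵀ))).trace := by
        rw [trace_transpose_mul_self_eq_sum_dotProduct]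
        refine Finset.sum_congr rfl fun i _ => ?_
        have hrow : (diagonal σ * (U * Vᵀ)) i = σ i • (U * Vᵀ) i := by
          ext j; simp [diagonal_mul]
        rw [hrow, smul_dotProduct, dotProduct_smul, smul_eq_mul, smul_eq_mul]; ring
    _ = ((Uᵀ * diagonal σ * U * Vᵀ)ᵀ * (Uᵀ * diagonal σ * U * Vᵀ)).trace := by
        rw [Matrix.mul_assoc, Matrix.mul_assoc,
          transpose_mul_self_mul_left_of_transpose_mul_eq_one (Q := Uᵀ)
            (by rw [transpose_transpose, hU])]

theorem stmt_7_general {n m : ℕ} (hmn : m < n)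
    (P₀ : Matrix (Fin n) (Fin n) ℝ)
    (σ : Fin n → ℝ) (hσ : Antitone σ) (hσ0 : ∀ i : Fin n, 0 ≤ σ i)
    (u : Fin n → Fin n → ℝ)
    (hortho : ∀ i j, u i ⬝ᵥ u j = if i = j then (1 : ℝ) else 0)
    (heig : ∀ i, P₀ *ᵥ u i = σ i • u i)
    (H : Matrix (Fin m) (Fin n) ℝ) :
    ∑ i ∈ Finset.univ.filter (fun i : Fin n => m ≤ (i : ℕ)), (σ i) ^ 2 ≤
      Matrix.trace ((P₀ - P₀ * Hᵀ * (H * P₀ * Hᵀ)⁻¹ * H * P₀)ᵀ *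
        (P₀ - P₀ * Hᵀ * (H * P₀ * Hᵀ)⁻¹ * H * P₀)) := by
  obtain ⟨k, hk, V, hVV, hV⟩ := exists_orthonormal_rows_mul_transpose_eq_zero (H * P₀)
  rw [Fintype.card_fin, Fintype.card_fin] at hk
  have hU : of u * (of u)ᵀ = 1 := by
    ext i j; simpa [mul_apply, one_apply, dotProduct] using hortho i j
  have hP : P₀ = (of u)ᵀ * diagonal σ * of u :=
    eq_transpose_mul_diagonal_mul_of_mulVec_eq_smul hU heig
  have hA : (P₀ - P₀ * Hᵀ * (H * P₀ * Hᵀ)⁻¹ * H * P₀) * Vᵀ = P₀ * Vᵀ := by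
    rw [Matrix.sub_mul]
    simp only [Matrix.mul_assoc] at hV ⊢
    simp only [hV, Matrix.mul_zero, sub_zero]
  calc _ ≤ ((P₀ * Vᵀ)ᵀ * (P₀ * Vᵀ)).trace := by
        rw [hP]; exact sum_filter_sq_le_trace_of_mul_transpose_eq_one hmn hσ hσ0 hU hVV hk
    _ ≤ _ := by
        rw [← hA]; exact trace_transpose_mul_self_mul_transpose_le hVV _

/-- Lower bound for noiseless continuous sensing design: for any `m × n` measurement matrix
`H` (`m < n`) with `H P₀ Hᵀ` invertible, the squared Frobenius norm of the a posteriori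
covariance `P₀ − P₀ Hᵀ (H P₀ Hᵀ)⁻¹ H P₀` is at least the tail sum `∑_{i ≥ m} (σ i)²` of the
squared eigenvalues `σ 0 ≥ ⋯ ≥ σ (n-1) ≥ 0` of `P₀`. -/
theorem stmt_7 {n m : ℕ} (hmn : m < n)
    (P₀ : Matrix (Fin n) (Fin n) ℝ) (hP₀ : P₀.PosSemidef)
    (σ : Fin n → ℝ) (hσ : Antitone σ) (hσ0 : ∀ i : Fin n, 0 ≤ σ i)
    (u : Fin n → Fin n → ℝ)
    (hortho : ∀ i j, u i ⬝ᵥ u j = if i = j then (1 : ℝ) else 0)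
    (heig : ∀ i, P₀ *ᵥ u i = σ i • u i)
    (H : Matrix (Fin m) (Fin n) ℝ) (hinv : IsUnit (H * P₀ * Hᵀ)) :
    ∑ i ∈ Finset.univ.filter (fun i : Fin n => m ≤ (i : ℕ)), (σ i) ^ 2 ≤
      Matrix.trace ((P₀ - P₀ * Hᵀ * (H * P₀ * Hᵀ)⁻¹ * H * P₀)ᵀ *
        (P₀ - P₀ * Hᵀ * (H * P₀ * Hᵀ)⁻¹ * H * P₀)) :=
  stmt_7_general hmn P₀ σ hσ hσ0 u hortho heig H
end

section
/- Let P₀ be a symmetric positive semidefinite n×n real matrix with eigenvalues σ₁ ≥ ⋯ ≥ σₙ ≥ 0 and orthonormal eigenvectors u₁, …, uₙ, and let R be a symmetric positive definite m×m real matrix (m < n) with eigenvalues ρ₁ ≥ ⋯ ≥ ρ_m > 0 and orthonormal eigenvectors v₁, …, v_m. Define H = Σ_{i=1}^{m} v_{m−i+1} uᵢᵀ. Then H Hᵀ = I_m and tr(P₀ − P₀ Hᵀ (H P₀ Hᵀ + R)⁻¹ H P₀) = Σ_{i=1}^{m} σᵢ ρ_{m−i+1}/(σᵢ + ρ_{m−i+1})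 + Σ_{i=m+1}^{n} σᵢ. -/
/-!
Put `xᵢ = u (castLE i)` and `yᵢ = v (rev i)`; both are orthonormal families. Every matrix in
sight is a weighted sum of outer products of these families: `H = ∑ yᵢ xᵢᵀ`, and the eigen
equations give `P₀ = ∑ σₖ uₖ uₖᵀ`, `R = ∑ ρ (rev i) yᵢ yᵢᵀ`. A product of two such sums whose
inner vectors form the same orthonormal family collapses to a single sum with multiplied
weights. Hence `H P₀ Hᵀ + R = ∑ (σᵢ + ρ (rev i)) yᵢ yᵢᵀ` is inverted weightwise and the
correction term is `∑ σᵢ² / (σᵢ + ρ (rev i)) xᵢ xᵢᵀ`; traces are read off from the weights.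
-/

open Matrix Finset

section OuterProducts

variable {ι κ α β γ R : Type*} [CommRing R]

-- An `abbrev`, so that `simp` can rewrite with a hypothesis `hw : DotOrthonormal w`.
abbrev DotOrthonormal [Fintype α] [DecidableEq ι] (w : ι → α → R) : Prop :=
  ∀ i j, w i ⬝ᵥ w j = if i = j then 1 else 0

theorem DotOrthonormal.comp [Fintype α] [DecidableEq ι] [DecidableEq κ] {w : ι → α → R}
    (hw : DotOrthonormal w) {e : κ → ι} (he : Function.Injective e) :
    DotOrthonormal (w ∘ e) := by
  intro i j
  simp only [Function.comp_apply, hw (e i) (e j), he.eq_iff]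

theorem DotOrthonormal.vecMulVec_mul_vecMulVec [Fintype α] [DecidableEq ι] {w : ι → α → R}
    (hw : DotOrthonormal w) (a : β → R) (b : γ → R) (i j : ι) :
    vecMulVec a (w i) * vecMulVec (w j) b = if i = j then vecMulVec a b else 0 := by
  rw [Matrix.vecMulVec_mul_vecMulVec, hw]
  split_ifs <;> ext <;> simp [vecMulVec_apply]

def sumVecMulVec [Fintype ι] (f : ι → R) (a : ι → α → R) (b : ι → β → R) : Matrix α β R :=
  ∑ i, f i • vecMulVec (a i) (b i)

variable [Fintype ι]

theorem transpose_sumVecMulVec (f : ι → R) (a : ι → α → R) (b : ι → β → R) :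
    (sumVecMulVec f a b)ᵀ = sumVecMulVec f b a := by
  simp only [sumVecMulVec, transpose_sum, transpose_smul, transpose_vecMulVec]

theorem sumVecMulVec_add (f g : ι → R) (a : ι → α → R) (b : ι → β → R) :
    sumVecMulVec f a b + sumVecMulVec g a b = sumVecMulVec (f + g) a b := by
  simp only [sumVecMulVec, ← sum_add_distrib, Pi.add_apply, add_smul]

theorem mul_sumVecMulVec_of_mulVec_eq [Fintype α] {A : Matrix α α R} {a : ι → α → R}
    {μ : ι → R} (hA : ∀ i, A *ᵥ a i = μ i • a i) (f : ι → R) (b : ι → β → R) :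
    A * sumVecMulVec f a b = sumVecMulVec (μ * f) a b := by
  simp only [sumVecMulVec, Matrix.mul_sum, Matrix.mul_smul, mul_vecMulVec, hA, smul_vecMulVec,
    smul_smul, Pi.mul_apply, mul_comm]

theorem sumVecMulVec_mul_sumVecMulVec [Fintype β] [DecidableEq ι] {w : ι → β → R}
    (hw : DotOrthonormal w) (f g : ι → R) (a : ι → α → R) (b : ι → γ → R) :
    sumVecMulVec f a w * sumVecMulVec g w b = sumVecMulVec (f * g) a b := by
  simp only [sumVecMulVec, Matrix.sum_mul, Matrix.mul_sum, Matrix.smul_mul, Matrix.mul_smul,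
    hw.vecMulVec_mul_vecMulVec, smul_ite, smul_zero, sum_ite_eq', mem_univ, if_true,
    smul_smul, Pi.mul_apply, mul_comm]

theorem trace_sumVecMulVec [Fintype α] [DecidableEq ι] {w : ι → α → R} (hw : DotOrthonormal w)
    (f : ι → R) : trace (sumVecMulVec f w w) = ∑ i, f i := by
  simp [sumVecMulVec, trace_sum, hw _ _]

variable [DecidableEq ι]

theorem sumVecMulVec_one {w : ι → ι → R} (hw : DotOrthonormal w) : sumVecMulVec 1 w w = 1 := by
  have hrows : of w * (of w)ᵀ = 1 := by
    ext i j
    simpa [mul_apply, dotProduct, one_apply] using hw i j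
  rw [← mul_eq_one_comm.mp hrows]
  ext a b
  simp [sumVecMulVec, mul_apply, vecMulVec_apply, Matrix.sum_apply]

theorem eq_sumVecMulVec_of_mulVec_eq {w : ι → ι → R} (hw : DotOrthonormal w) {A : Matrix ι ι R}
    {μ : ι → R} (hA : ∀ i, A *ᵥ w i = μ i • w i) : A = sumVecMulVec μ w w := by
  rw [← mul_one A, ← sumVecMulVec_one hw, mul_sumVecMulVec_of_mulVec_eq hA, mul_one]

theorem inv_sumVecMulVec {K : Type*} [Field K] {w : ι → ι → K}
    (hw : DotOrthonormal w) {f : ι → K} (hf : ∀ i, f i ≠ 0) :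
    (sumVecMulVec f w w)⁻¹ = sumVecMulVec f⁻¹ w w := by
  apply inv_eq_right_inv
  rw [sumVecMulVec_mul_sumVecMulVec hw, ← sumVecMulVec_one hw]
  congr 1
  ext i
  exact mul_inv_cancel₀ (hf i)

theorem mul_transpose_mul_inv_add_mul_mul_eq_sumVecMulVec {K : Type*} [Field K] [Fintype α]
    {x : ι → α → K} {y : ι → ι → K} (hx : DotOrthonormal x) (hy : DotOrthonormal y)
    {H : Matrix ι α K} (hH : H = sumVecMulVec 1 y x) {P : Matrix α α K} (hPsymm : Pᵀ = P)
    {s : ι → K} (hPx : ∀ i, P *ᵥ x i = s i • x i) {r : ι → K} (hsr : ∀ i, s i + r i ≠ 0) :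
    P * Hᵀ * (H * P * Hᵀ + sumVecMulVec r y y)⁻¹ * H * P =
      sumVecMulVec (s * (s + r)⁻¹ * s) x x := by
  have hPHt : P * Hᵀ = sumVecMulVec s x y := by
    rw [hH, transpose_sumVecMulVec, mul_sumVecMulVec_of_mulVec_eq hPx, mul_one]
  have hHP : H * P = sumVecMulVec s y x := by
    rw [← transpose_transpose (H * P), transpose_mul, hPsymm, hPHt, transpose_sumVecMulVec]
  have hS : H * P * Hᵀ + sumVecMulVec r y y = sumVecMulVec (s + r) y y := by
    rw [hHP, hH, transpose_sumVecMulVec, sumVecMulVec_mul_sumVecMulVec hx, mul_one,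
      sumVecMulVec_add]
  rw [Matrix.mul_assoc _ H P, hS, hPHt, hHP, inv_sumVecMulVec (f := s + r) hy hsr,
    sumVecMulVec_mul_sumVecMulVec hy, sumVecMulVec_mul_sumVecMulVec hy]

end OuterProducts

theorem Fin.sum_univ_eq_sum_castLE_add_sum_filter_le {M : Type*} [AddCommMonoid M] {m n : ℕ}
    (h : m ≤ n) (f : Fin n → M) :
    ∑ i, f i =
      ∑ i : Fin m, f (Fin.castLE h i) + ∑ i ∈ univ.filter (fun i : Fin n => m ≤ (i : ℕ)), f i := by
  have hlow : univ.filter (fun i : Fin n => ¬ m ≤ (i : ℕ)) = univ.map (Fin.castLEEmb h) := by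
    ext i
    simp only [mem_filter, mem_univ, true_and, not_le, mem_map, Fin.coe_castLEEmb]
    exact ⟨fun hi => ⟨⟨i, hi⟩, rfl⟩, by rintro ⟨j, rfl⟩; exact j.2⟩
  rw [← sum_filter_not_add_sum_filter univ (fun i : Fin n => m ≤ (i : ℕ)), hlow, sum_map]
  rfl

theorem stmt_8_general {n m : ℕ} (hmn : m < n)
    (P₀ : Matrix (Fin n) (Fin n) ℝ)
    (σ : Fin n → ℝ) (hσ0 : ∀ i : Fin n, 0 ≤ σ i)
    (u : Fin n → Fin n → ℝ)
    (huortho : ∀ i j, u i ⬝ᵥ u j = if i = j then (1 : ℝ) else 0)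
    (hueig : ∀ i, P₀ *ᵥ u i = σ i • u i)
    (R : Matrix (Fin m) (Fin m) ℝ)
    (ρ : Fin m → ℝ) (hρpos : ∀ j : Fin m, 0 < ρ j)
    (v : Fin m → Fin m → ℝ)
    (hvortho : ∀ i j, v i ⬝ᵥ v j = if i = j then (1 : ℝ) else 0)
    (hveig : ∀ j, R *ᵥ v j = ρ j • v j)
    (H : Matrix (Fin m) (Fin n) ℝ)
    (hH : H = ∑ i : Fin m, Matrix.vecMulVec (v i.rev) (u (Fin.castLE hmn.le i))) :
    H * Hᵀ = 1 ∧
      Matrix.trace (P₀ - P₀ * Hᵀ * (H * P₀ * Hᵀ + R)⁻¹ * H * P₀) =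
        (∑ i : Fin m, σ (Fin.castLE hmn.le i) * ρ i.rev /
            (σ (Fin.castLE hmn.le i) + ρ i.rev)) +
          ∑ i ∈ Finset.univ.filter (fun i : Fin n => m ≤ (i : ℕ)), σ i := by
  set c := Fin.castLE hmn.le
  have hu : DotOrthonormal u := huortho
  have hv : DotOrthonormal v := hvortho
  have hx : DotOrthonormal (u ∘ c) := hu.comp (Fin.castLE_injective _)
  have hy : DotOrthonormal (v ∘ Fin.rev) := hv.comp Fin.rev_injective
  have hH' : H = sumVecMulVec 1 (v ∘ Fin.rev) (u ∘ c) := by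
    simp only [hH, sumVecMulVec, Pi.one_apply, one_smul, Function.comp_apply]
  have hP : P₀ = sumVecMulVec σ u u := eq_sumVecMulVec_of_mulVec_eq hu hueig
  have hR : R = sumVecMulVec (ρ ∘ Fin.rev) (v ∘ Fin.rev) (v ∘ Fin.rev) :=
    eq_sumVecMulVec_of_mulVec_eq hy fun i => hveig i.rev
  have hpos : ∀ i, (σ ∘ c) i + (ρ ∘ Fin.rev) i ≠ 0 := fun i =>
    (add_pos_of_nonneg_of_pos (hσ0 _) (hρpos _)).ne'
  refine ⟨by rw [hH', transpose_sumVecMulVec, sumVecMulVec_mul_sumVecMulVec hx, mul_one,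
    sumVecMulVec_one hy], ?_⟩
  rw [trace_sub, hR, mul_transpose_mul_inv_add_mul_mul_eq_sumVecMulVec hx hy hH'
      (by rw [hP, transpose_sumVecMulVec]) (fun i => hueig (c i)) hpos,
    trace_sumVecMulVec hx, hP, trace_sumVecMulVec hu,
    Fin.sum_univ_eq_sum_castLE_add_sum_filter_le hmn.le, add_sub_right_comm, ← sum_sub_distrib]
  congr 1
  refine sum_congr rfl fun i _ => ?_
  have hi : σ (c i) + ρ i.rev ≠ 0 := hpos i
  simp only [Pi.mul_apply, Pi.inv_apply, Pi.add_apply, Function.comp_apply]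
  field_simp
  ring

/-- Optimal noisy continuous sensing design, attainment (Kostas): with `P₀` PSD with
eigenpairs `(σ i, u i)` (`σ` nonincreasing) and `R` positive definite with eigenpairs
`(ρ j, v j)` (`ρ` nonincreasing), the matrix `H = ∑_{i<m} v_{m−i+1} u iᵀ` has orthonormal
rows and
`tr(P₀ − P₀ Hᵀ (H P₀ Hᵀ + R)⁻¹ H P₀) = ∑_{i<m} σ i ρ_{m−i+1}/(σ i + ρ_{m−i+1}) + ∑_{i≥m} σ i`. -/
theorem stmt_8 {n m : ℕ} (hmn : m < n)
    (P₀ : Matrix (Fin n) (Fin n) ℝ) (hP₀ : P₀.PosSemidef)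
    (σ : Fin n → ℝ) (hσ : Antitone σ) (hσ0 : ∀ i : Fin n, 0 ≤ σ i)
    (u : Fin n → Fin n → ℝ)
    (huortho : ∀ i j, u i ⬝ᵥ u j = if i = j then (1 : ℝ) else 0)
    (hueig : ∀ i, P₀ *ᵥ u i = σ i • u i)
    (R : Matrix (Fin m) (Fin m) ℝ) (hR : R.PosDef)
    (ρ : Fin m → ℝ) (hρ : Antitone ρ) (hρpos : ∀ j : Fin m, 0 < ρ j)
    (v : Fin m → Fin m → ℝ)
    (hvortho : ∀ i j, v i ⬝ᵥ v j = if i = j then (1 : ℝ) else 0)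
    (hveig : ∀ j, R *ᵥ v j = ρ j • v j)
    (H : Matrix (Fin m) (Fin n) ℝ)
    (hH : H = ∑ i : Fin m, Matrix.vecMulVec (v i.rev) (u (Fin.castLE hmn.le i))) :
    H * Hᵀ = 1 ∧
      Matrix.trace (P₀ - P₀ * Hᵀ * (H * P₀ * Hᵀ + R)⁻¹ * H * P₀) =
        (∑ i : Fin m, σ (Fin.castLE hmn.le i) * ρ i.rev /
            (σ (Fin.castLE hmn.le i) + ρ i.rev)) +
          ∑ i ∈ Finset.univ.filter (fun i : Fin n => m ≤ (i : ℕ)), σ i :=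
  stmt_8_general hmn P₀ σ hσ0 u huortho hueig R ρ hρpos v hvortho hveig H hH
end

section
/- Let P₀ be a symmetric positive definite n×n real matrix and R a symmetric positive semidefinite m×m real matrix, and let H₀ be an m×n real matrix such that H₀ P₀ H₀ᵀ + R is invertible. Define, for H in a neighborhood of H₀, f(H) = ‖P₀ − P₀ Hᵀ (H P₀ Hᵀ + R)⁻¹ H P₀‖_F², and write Σ(H) = (H P₀ Hᵀ + R)⁻¹ and P_p(H) = P₀ − P₀ Hᵀ Σ(H) H P₀. Then f is differentiable at H₀ and its gradient with respect to the Frobenius inner product ⟨A,B⟩ = tr(AᵀB) on m×n matrices is ∇f(H₀) = −4 [P_p(H₀)² P₀ H₀ᵀ Σ(H₀)]ᵀ; equivalently, for every m×n matrix K, the Fréchet derivative satisfies Df(H₀)[K] = −4 tr(P_p(H₀)² P₀ H₀ᵀ Σ(H₀) K). -/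
open Matrix

attribute [local instance]
  Matrix.frobeniusSeminormedAddCommGroup Matrix.frobeniusNormedAddCommGroup
  Matrix.frobeniusIsBoundedSMul Matrix.frobeniusNormedSpace

/-!
Differentiating `Σ(H) = (H P₀ Hᵀ + R)⁻¹` gives `dΣ = -Σ (dH P₀ Hᵀ + H P₀ dHᵀ) Σ`; collecting
terms with `P₀ Hᵀ Σ H P₀ = P₀ - P_p`, the posterior covariance varies as
`dP_p = -(G dH P_p + (G dH P_p)ᵀ)` with `G = P₀ Hᵀ Σ`. As `P_p` is symmetric,
`d tr(P_pᵀ P_p) = 2 tr(P_p dP_p) = -4 tr(P_p G dH P_p)`, which is `-4 tr(P_p² G dH)` by cyclicity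
of the trace.
-/

section MatrixCalculus

variable {𝕜 : Type*} [RCLike 𝕜] {l m n p q : Type*} [Fintype l] [Fintype m] [Fintype n]
  [Fintype p] [Fintype q] {x : Matrix p q 𝕜}

theorem isBoundedBilinearMap_matrix_mul :
    IsBoundedBilinearMap 𝕜 (fun A : Matrix l m 𝕜 × Matrix m n 𝕜 => A.1 * A.2) where
  add_left := Matrix.add_mul
  smul_left := Matrix.smul_mul
  add_right := Matrix.mul_add
  smul_right c A B := Matrix.mul_smul A c B
  bound := ⟨1, one_pos, fun A B => by simpa using frobenius_norm_mul A B⟩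

section Mul

variable {f : Matrix p q 𝕜 → Matrix l m 𝕜} {g : Matrix p q 𝕜 → Matrix m n 𝕜}

@[fun_prop]
theorem DifferentiableAt.matrix_mul (hf : DifferentiableAt 𝕜 f x) (hg : DifferentiableAt 𝕜 g x) :
    DifferentiableAt 𝕜 (fun y => f y * g y) x := by
  exact (isBoundedBilinearMap_matrix_mul.differentiableAt (f x, g x)).comp x (hf.prodMk hg)

theorem fderiv_matrix_mul_apply (hf : DifferentiableAt 𝕜 f x) (hg : DifferentiableAt 𝕜 g x)
    (v : Matrix p q 𝕜) :
    fderiv 𝕜 (fun y => f y * g y) x v = f x * fderiv 𝕜 g x v + fderiv 𝕜 f x v * g x := by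
  have h := (isBoundedBilinearMap_matrix_mul.hasFDerivAt (f x, g x)).comp x
    (hf.hasFDerivAt.prodMk hg.hasFDerivAt)
  -- `h.fderiv` is stated with the Frobenius instances; `show` restates it with the matrix ones,
  -- which are equal only up to unfolding, so that it can be used for rewriting.
  rw [show fderiv 𝕜 (fun y => f y * g y) x = _ from h.fderiv]
  rfl

end Mul

section Linear

@[fun_prop]
theorem differentiable_transpose :
    Differentiable 𝕜 (transpose : Matrix p q 𝕜 → Matrix q p 𝕜) := by
  exact (transposeLinearEquiv p q 𝕜 𝕜).toLinearMap.toContinuousLinearMap.differentiable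

theorem fderiv_matrix_transpose_apply {f : Matrix p q 𝕜 → Matrix m n 𝕜}
    (hf : DifferentiableAt 𝕜 f x) (v : Matrix p q 𝕜) :
    fderiv 𝕜 (fun y => (f y)ᵀ) x v = (fderiv 𝕜 f x v)ᵀ := by
  have h := (transposeLinearEquiv m n 𝕜 𝕜).toLinearMap.toContinuousLinearMap.hasFDerivAt.comp x
    hf.hasFDerivAt
  rw [show fderiv 𝕜 (fun y => (f y)ᵀ) x = _ from h.fderiv]
  rfl

theorem fderiv_transpose_apply (v : Matrix p q 𝕜) : fderiv 𝕜 transpose x v = vᵀ := by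
  rw [show fderiv 𝕜 transpose x = _ from
    (transposeLinearEquiv p q 𝕜 𝕜).toLinearMap.toContinuousLinearMap.fderiv]
  rfl

@[fun_prop]
theorem differentiable_trace : Differentiable 𝕜 (trace : Matrix n n 𝕜 → 𝕜) := by
  exact (traceLinearMap n 𝕜 𝕜).toContinuousLinearMap.differentiable

theorem fderiv_matrix_trace_apply {f : Matrix p q 𝕜 → Matrix n n 𝕜}
    (hf : DifferentiableAt 𝕜 f x) (v : Matrix p q 𝕜) :
    fderiv 𝕜 (fun y => trace (f y)) x v = trace (fderiv 𝕜 f x v) := by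
  have h := (traceLinearMap n 𝕜 𝕜).toContinuousLinearMap.hasFDerivAt.comp x hf.hasFDerivAt
  rw [show fderiv 𝕜 (fun y => trace (f y)) x = _ from h.fderiv]
  rfl

-- Mathlib's `fderiv_const_sub` and `fderiv_add_const` do not fire on matrices: their `+` and `-`
-- come from the Frobenius normed group, not reducibly the matrix ones.
theorem fderiv_matrix_const_sub_apply (c : Matrix m n 𝕜) (f : Matrix p q 𝕜 → Matrix m n 𝕜)
    (v : Matrix p q 𝕜) : fderiv 𝕜 (fun y => c - f y) x v = -fderiv 𝕜 f x v := by
  rw [show fderiv 𝕜 (fun y => c - f y) x = _ from fderiv_const_sub c]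
  rfl

theorem fderiv_matrix_add_const (f : Matrix p q 𝕜 → Matrix m n 𝕜) (c : Matrix m n 𝕜) :
    fderiv 𝕜 (fun y => f y + c) x = fderiv 𝕜 f x :=
  fderiv_add_const c

end Linear

section Inverse

attribute [local instance] frobeniusNormedRing frobeniusNormedAlgebra

variable [DecidableEq m] {A : Matrix p q 𝕜 → Matrix m m 𝕜}

theorem HasFDerivAt.matrix_inv (hA : DifferentiableAt 𝕜 A x) (hx : IsUnit (A x)) :
    HasFDerivAt (fun y => (A y)⁻¹)
      (-ContinuousLinearMap.mulLeftRight 𝕜 _ ↑hx.unit⁻¹ ↑hx.unit⁻¹ ∘L fderiv 𝕜 A x) x := by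
  have h := hasFDerivAt_ringInverse (𝕜 := 𝕜) hx.unit
  rw [hx.unit_spec] at h
  simp only [nonsing_inv_eq_ringInverse]
  exact h.comp x hA.hasFDerivAt

@[fun_prop]
theorem DifferentiableAt.matrix_inv (hA : DifferentiableAt 𝕜 A x) (hx : IsUnit (A x)) :
    DifferentiableAt 𝕜 (fun y => (A y)⁻¹) x :=
  (HasFDerivAt.matrix_inv hA hx).differentiableAt

theorem fderiv_matrix_inv_apply (hA : DifferentiableAt 𝕜 A x) (hx : IsUnit (A x))
    (v : Matrix p q 𝕜) :
    fderiv 𝕜 (fun y => (A y)⁻¹) x v = -((A x)⁻¹ * fderiv 𝕜 A x v * (A x)⁻¹) := by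
  rw [show fderiv 𝕜 (fun y => (A y)⁻¹) x = _ from (HasFDerivAt.matrix_inv hA hx).fderiv]
  simp only [coe_units_inv, IsUnit.unit_spec, nonsing_inv_eq_ringInverse]
  rfl

end Inverse

theorem fderiv_trace_transpose_mul_self_apply {f : Matrix p q 𝕜 → Matrix m n 𝕜}
    (hf : DifferentiableAt 𝕜 f x) (v : Matrix p q 𝕜) :
    fderiv 𝕜 (fun y => trace ((f y)ᵀ * f y)) x v = 2 * trace ((f x)ᵀ * fderiv 𝕜 f x v) := by
  rw [fderiv_matrix_trace_apply (by fun_prop), fderiv_matrix_mul_apply (by fun_prop) hf,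
    fderiv_matrix_transpose_apply hf, trace_add, ← trace_transpose (_ᵀ * f x), transpose_mul,
    transpose_transpose]
  ring

end MatrixCalculus

section Symmetric

variable {R : Type*} [CommRing R] {m n : Type*} [Fintype n]

theorem Matrix.IsSymm.mul_mul_transpose {P : Matrix n n R} (hP : P.IsSymm) (H : Matrix m n R) :
    (H * P * Hᵀ).IsSymm := by
  rw [IsSymm, transpose_mul, transpose_mul, transpose_transpose, hP.eq, Matrix.mul_assoc]

theorem Matrix.IsSymm.trace_mul_add_transpose {S : Matrix n n R} (hS : S.IsSymm)
    (N : Matrix n n R) : trace (S * (N + Nᵀ)) = 2 * trace (S * N) := by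
  rw [Matrix.mul_add, trace_add, ← trace_transpose (S * Nᵀ), transpose_mul, transpose_transpose,
    hS.eq, trace_mul_comm N]
  ring

end Symmetric

section PosteriorCovariance

variable {m n : Type*} [Fintype m] [Fintype n] [DecidableEq m]
  (P : Matrix n n ℝ) (R : Matrix m m ℝ) {H₀ : Matrix m n ℝ}

noncomputable def posteriorCov (H : Matrix m n ℝ) : Matrix n n ℝ :=
  P - P * Hᵀ * (H * P * Hᵀ + R)⁻¹ * H * P

-- The cost `V₁(P, H, R) = ‖P_p(H)‖_F²` of the paper.
noncomputable def sensingCost (H : Matrix m n ℝ) : ℝ :=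
  trace ((posteriorCov P R H)ᵀ * posteriorCov P R H)

variable {P R}

theorem isSymm_posteriorCov (hP : P.IsSymm) (hR : R.IsSymm) (H : Matrix m n ℝ) :
    (posteriorCov P R H).IsSymm := by
  have hS : (H * P * Hᵀ + R)⁻¹.IsSymm := ((hP.mul_mul_transpose H).add hR).inv
  simp only [IsSymm, posteriorCov, transpose_sub, transpose_mul, transpose_transpose, hP.eq, hS.eq]
  simp only [Matrix.mul_assoc]

theorem differentiableAt_posteriorCov (hinv : IsUnit (H₀ * P * H₀ᵀ + R)) :
    DifferentiableAt ℝ (posteriorCov P R) H₀ := by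
  unfold posteriorCov
  fun_prop (disch := exact hinv)

theorem fderiv_posteriorCov_apply (hP : P.IsSymm) (hR : R.IsSymm)
    (hinv : IsUnit (H₀ * P * H₀ᵀ + R)) (K : Matrix m n ℝ) :
    fderiv ℝ (posteriorCov P R) H₀ K =
      -(P * H₀ᵀ * (H₀ * P * H₀ᵀ + R)⁻¹ * K * posteriorCov P R H₀ +
        (P * H₀ᵀ * (H₀ * P * H₀ᵀ + R)⁻¹ * K * posteriorCov P R H₀)ᵀ) := by
  unfold posteriorCov
  set S := (H₀ * P * H₀ᵀ + R)⁻¹ with hS_def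
  have hS : S.IsSymm := ((hP.mul_mul_transpose H₀).add hR).inv
  have hA : DifferentiableAt ℝ (fun H : Matrix m n ℝ => H * P * Hᵀ + R) H₀ := by fun_prop
  have hdA : fderiv ℝ (fun H => H * P * Hᵀ + R) H₀ K = K * P * H₀ᵀ + H₀ * P * Kᵀ := by
    rw [fderiv_matrix_add_const, add_comm]
    simp (disch := fun_prop) [fderiv_matrix_mul_apply, fderiv_transpose_apply]
  have hdS : fderiv ℝ (fun H => (H * P * Hᵀ + R)⁻¹) H₀ K =
      -(S * (K * P * H₀ᵀ + H₀ * P * Kᵀ) * S) := by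
    rw [fderiv_matrix_inv_apply hA hinv, hdA]
  rw [fderiv_matrix_const_sub_apply]
  simp (disch := fun_prop (disch := exact hinv)) only [fderiv_matrix_mul_apply,
    fderiv_transpose_apply, hdS, fderiv_fun_const, fderiv_fun_id, ← hS_def]
  simp only [Pi.zero_apply, _root_.zero_apply, ContinuousLinearMap.id_apply, Matrix.mul_zero,
    Matrix.zero_mul, zero_add, add_zero, transpose_mul, transpose_sub, transpose_transpose, hP.eq,
    hS.eq, Matrix.mul_sub, Matrix.mul_add, Matrix.add_mul, Matrix.mul_neg, Matrix.neg_mul,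
    Matrix.mul_assoc]
  abel

theorem differentiableAt_sensingCost (hinv : IsUnit (H₀ * P * H₀ᵀ + R)) :
    DifferentiableAt ℝ (sensingCost P R) H₀ := by
  have := differentiableAt_posteriorCov hinv
  unfold sensingCost
  fun_prop

theorem fderiv_sensingCost_apply (hP : P.IsSymm) (hR : R.IsSymm)
    (hinv : IsUnit (H₀ * P * H₀ᵀ + R)) (K : Matrix m n ℝ) :
    fderiv ℝ (sensingCost P R) H₀ K = -4 * trace (posteriorCov P R H₀ * posteriorCov P R H₀ * P *
      H₀ᵀ * (H₀ * P * H₀ᵀ + R)⁻¹ * K) := by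
  have hPp := isSymm_posteriorCov hP hR H₀
  unfold sensingCost
  rw [fderiv_trace_transpose_mul_self_apply (differentiableAt_posteriorCov hinv),
    fderiv_posteriorCov_apply hP hR hinv, hPp.eq, Matrix.mul_neg, trace_neg,
    hPp.trace_mul_add_transpose, trace_mul_comm, Matrix.mul_assoc, trace_mul_comm]
  simp only [Matrix.mul_assoc]
  ring

end PosteriorCovariance

/-- Gradient of the cost `f(H) = ‖P_p(H)‖_F² = tr(P_p(H)ᵀ P_p(H))` (Proposition 1): `f` is
differentiable at `H₀`, and w.r.t. the Frobenius inner product `⟨A,B⟩ = tr(AᵀB)` its gradient is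
`∇f(H₀) = −4 [P_p(H₀)² P₀ H₀ᵀ Σ(H₀)]ᵀ`; equivalently the Fréchet derivative satisfies
`Df(H₀)[K] = −4 tr(P_p(H₀)² P₀ H₀ᵀ Σ(H₀) K)`, where `Σ(H) = (H P₀ Hᵀ + R)⁻¹` and
`P_p(H) = P₀ − P₀ Hᵀ Σ(H) H P₀`. -/
theorem stmt_10 {m n : ℕ}
    (P₀ : Matrix (Fin n) (Fin n) ℝ) (R : Matrix (Fin m) (Fin m) ℝ)
    (H₀ : Matrix (Fin m) (Fin n) ℝ)
    (hP₀ : P₀.PosDef) (hR : R.PosSemidef) (hinv : IsUnit (H₀ * P₀ * H₀ᵀ + R))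
    (f : Matrix (Fin m) (Fin n) ℝ → ℝ)
    (hf : f = fun H =>
      Matrix.trace ((P₀ - P₀ * Hᵀ * (H * P₀ * Hᵀ + R)⁻¹ * H * P₀)ᵀ *
        (P₀ - P₀ * Hᵀ * (H * P₀ * Hᵀ + R)⁻¹ * H * P₀)))
    (Sig : Matrix (Fin m) (Fin m) ℝ) (hSig : Sig = (H₀ * P₀ * H₀ᵀ + R)⁻¹)
    (Pp : Matrix (Fin n) (Fin n) ℝ) (hPp : Pp = P₀ - P₀ * H₀ᵀ * Sig * H₀ * P₀)
    (grad : Matrix (Fin m) (Fin n) ℝ)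
    (hgrad : grad = (-4 : ℝ) • (Pp * Pp * P₀ * H₀ᵀ * Sig)ᵀ) :
    ∃ L : Matrix (Fin m) (Fin n) ℝ →L[ℝ] ℝ,
      HasFDerivAt f L H₀ ∧
      (∀ K : Matrix (Fin m) (Fin n) ℝ, L K = Matrix.trace (gradᵀ * K)) ∧
      (∀ K : Matrix (Fin m) (Fin n) ℝ,
        L K = -4 * Matrix.trace (Pp * Pp * P₀ * H₀ᵀ * Sig * K)) := by
  have hP : P₀.IsSymm := isHermitian_iff_isSymm.mp hP₀.isHermitian
  have hRs : R.IsSymm := isHermitian_iff_isSymm.mp hR.isHermitian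
  replace hf : f = sensingCost P₀ R := hf
  subst hf hSig hPp hgrad
  have hL := fderiv_sensingCost_apply hP hRs hinv
  refine ⟨fderiv ℝ (sensingCost P₀ R) H₀, (differentiableAt_sensingCost hinv).hasFDerivAt,
    fun K => ?_, hL⟩
  rw [hL, transpose_smul, transpose_transpose, smul_mul, trace_smul, smul_eq_mul]
  rfl
end

section
/- Let P₀ be a symmetric positive semidefinite n×n real matrix with spectral decomposition P₀ = Σ_{i=1}^{n} σᵢ uᵢuᵢᵀ (u₁,…,uₙ orthonormal), let S ⊆ {1,…,n} with |S| = m and σᵢ > 0 for all i ∈ S, let U_S be the n×m matrix whose columns are the uᵢ for i ∈ S, and let H = M U_Sᵀ for some invertible m×m real matrix M. Then H P₀ Hᵀ is invertible, P_p(H) = P₀ − P₀ Hᵀ (H P₀ Hᵀ)⁻¹ H P₀ = Σ_{i∉S} σᵢ uᵢuᵢᵀ, and consequently P_p(H) P₀ Hᵀ = 0, so the gradient −4[P_p(H)² P₀ Hᵀ (H P₀ Hᵀ)⁻¹]ᵀ of ‖P_p‖_F² vanishes at H. -/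
open Matrix

/-- Stationarity of the noiseless cost at subsets of principal components: if
`P₀ = ∑ i σ i • u i u iᵀ` with `u` orthonormal and `σ ≥ 0`, `g : Fin m → Fin n` picks an
`m`-element subset `S` of indices with `σ (g i) > 0`, and `H = M U_Sᵀ` for an invertible
`M` (rows of `U_Sᵀ` being the chosen eigenvectors), then `H P₀ Hᵀ` is invertible,
`P_p(H) = P₀ − P₀ Hᵀ (H P₀ Hᵀ)⁻¹ H P₀ = ∑_{i ∉ S} σ i • u i u iᵀ`, hence
`P_p(H) P₀ Hᵀ = 0` and the gradient `−4 [P_p(H)² P₀ Hᵀ (H P₀ Hᵀ)⁻¹]ᵀ` of `‖P_p‖_F²`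
vanishes at `H`. -/
theorem stmt_12 {n m : ℕ}
    (σ : Fin n → ℝ) (hσ0 : ∀ i, 0 ≤ σ i)
    (u : Fin n → Fin n → ℝ)
    (hortho : ∀ i j, u i ⬝ᵥ u j = if i = j then (1 : ℝ) else 0)
    (P₀ : Matrix (Fin n) (Fin n) ℝ)
    (hP₀ : P₀ = ∑ i : Fin n, σ i • Matrix.vecMulVec (u i) (u i))
    (g : Fin m → Fin n) (hg : Function.Injective g)
    (hσpos : ∀ i : Fin m, 0 < σ (g i))
    (M : Matrix (Fin m) (Fin m) ℝ) (hM : IsUnit M)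
    (H : Matrix (Fin m) (Fin n) ℝ)
    (hH : H = M * Matrix.of fun (i : Fin m) (j : Fin n) => u (g i) j)
    (Pp : Matrix (Fin n) (Fin n) ℝ)
    (hPp : Pp = P₀ - P₀ * Hᵀ * (H * P₀ * Hᵀ)⁻¹ * H * P₀) :
    IsUnit (H * P₀ * Hᵀ) ∧
      Pp = ∑ i ∈ Finset.univ \ Finset.image g Finset.univ,
        σ i • Matrix.vecMulVec (u i) (u i) ∧
      Pp * P₀ * Hᵀ = 0 ∧
      (-4 : ℝ) • (Pp * Pp * P₀ * Hᵀ * (H * P₀ * Hᵀ)⁻¹)ᵀ = 0 := by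
  set U : Matrix (Fin m) (Fin n) ℝ := Matrix.of fun i j => u (g i) j with hU
  set D : Matrix (Fin m) (Fin m) ℝ := Matrix.diagonal (fun i => σ (g i)) with hD
  have hUUt : U * Uᵀ = 1 := by
    ext i j
    simp only [mul_apply, transpose_apply, hU, of_apply]
    rw [show (∑ k, u (g i) k * u (g j) k) = u (g i) ⬝ᵥ u (g j) from rfl,
      hortho (g i) (g j)]
    by_cases h : i = j
    · simp [h, Matrix.one_apply]
    · simp only [Matrix.one_apply, if_neg h]
      rw [if_neg fun h' => h (hg h')]
  have hP0Ut : P₀ * Uᵀ = Uᵀ * D := by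
    ext k j
    simp only [hP₀, mul_apply, transpose_apply, hU, hD, of_apply, Matrix.sum_apply,
      Matrix.smul_apply, vecMulVec_apply, smul_eq_mul, diagonal_apply, Finset.sum_mul]
    rw [Finset.sum_comm]
    have : ∀ i, (∑ l, σ i * (u i k * u i l) * u (g j) l)
        = σ i * u i k * (u i ⬝ᵥ u (g j)) := by
      intro i
      rw [dotProduct, Finset.mul_sum]
      exact Finset.sum_congr rfl fun l _ => by ring
    simp_rw [this, hortho, mul_ite, mul_one, mul_zero]
    rw [Finset.sum_ite_eq' Finset.univ (g j) (fun i => σ i * u i k)]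
    simp [mul_ite, mul_comm]
  have hP0symm : P₀ᵀ = P₀ := by
    ext i j
    simp [hP₀, Matrix.sum_apply, vecMulVec_apply, mul_comm]
  have hUP0 : U * P₀ = D * U := by
    have := congrArg Matrix.transpose hP0Ut
    simpa [transpose_mul, hP0symm, hD, Matrix.diagonal_transpose] using this
  have hHPH : H * P₀ * Hᵀ = M * D * Mᵀ := by
    rw [hH, transpose_mul]
    calc M * U * P₀ * (Uᵀ * Mᵀ) = M * ((U * P₀ * Uᵀ) * Mᵀ) := by
          simp only [Matrix.mul_assoc]
      _ = M * D * Mᵀ := by rw [hUP0, Matrix.mul_assoc D, hUUt, Matrix.mul_one,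
          Matrix.mul_assoc]
  have hdetM : IsUnit M.det := (Matrix.isUnit_iff_isUnit_det M).1 hM
  have hdetD : IsUnit D.det := by
    rw [hD, det_diagonal]
    exact isUnit_iff_ne_zero.2 (Finset.prod_ne_zero_iff.2 fun i _ => (hσpos i).ne')
  have hdetMt : IsUnit Mᵀ.det := by rwa [det_transpose]
  have hunit : IsUnit (H * P₀ * Hᵀ) := by
    rw [hHPH, Matrix.isUnit_iff_isUnit_det]
    simp only [det_mul]
    exact (hdetM.mul hdetD).mul hdetMt
  have hinv : (H * P₀ * Hᵀ)⁻¹ = Mᵀ⁻¹ * (D⁻¹ * M⁻¹) := by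
    rw [hHPH, Matrix.mul_inv_rev, Matrix.mul_inv_rev]
  have key : P₀ * Hᵀ * (H * P₀ * Hᵀ)⁻¹ * H * P₀ = Uᵀ * (D * U) := by
    rw [hinv, hH, transpose_mul]
    simp only [Matrix.mul_assoc]
    rw [← Matrix.mul_assoc P₀ Uᵀ, hP0Ut]
    simp only [Matrix.mul_assoc]
    rw [Matrix.mul_nonsing_inv_cancel_left _ _ hdetMt,
      Matrix.nonsing_inv_mul_cancel_left _ _ hdetM,
      Matrix.mul_nonsing_inv_cancel_left _ _ hdetD, hUP0]
  have hUtDU : Uᵀ * (D * U) = ∑ i : Fin m, σ (g i) • vecMulVec (u (g i)) (u (g i)) := by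
    ext k l
    simp only [mul_apply, transpose_apply, hU, hD, of_apply, diagonal_apply,
      Matrix.sum_apply, Matrix.smul_apply, vecMulVec_apply, smul_eq_mul,
      ite_mul, zero_mul, Finset.sum_ite_eq, Finset.mem_univ, if_true]
    exact Finset.sum_congr rfl fun t _ => by ring
  have hPp' : Pp = ∑ i ∈ Finset.univ \ Finset.image g Finset.univ,
      σ i • Matrix.vecMulVec (u i) (u i) := by
    rw [hPp, key, hUtDU,
      Finset.sum_sdiff_eq_sub (Finset.subset_univ _),
      Finset.sum_image (fun a _ b _ h => hg h), ← hP₀]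
  have hPpUt : Pp * Uᵀ = 0 := by
    ext k j
    simp only [hPp', mul_apply, transpose_apply, hU, of_apply, Matrix.sum_apply,
      Matrix.smul_apply, vecMulVec_apply, smul_eq_mul, Finset.sum_mul,
      Matrix.zero_apply]
    rw [Finset.sum_comm]
    have h2 : ∀ i ∈ Finset.univ \ Finset.image g Finset.univ,
        (∑ l, σ i * (u i k * u i l) * u (g j) l) = 0 := by
      intro i hi
      have hne : i ≠ g j := by
        intro h
        exact (Finset.mem_sdiff.1 hi).2 (h ▸ Finset.mem_image_of_mem g (Finset.mem_univ j))
      have : (∑ l, σ i * (u i k * u i l) * u (g j) l)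
          = σ i * u i k * (u i ⬝ᵥ u (g j)) := by
        rw [dotProduct, Finset.mul_sum]
        exact Finset.sum_congr rfl fun l _ => by ring
      rw [this, hortho, if_neg hne, mul_zero]
    exact Finset.sum_eq_zero h2
  have hPpP0Ht : Pp * P₀ * Hᵀ = 0 := by
    rw [hH, transpose_mul, ← Matrix.mul_assoc, Matrix.mul_assoc Pp P₀ Uᵀ, hP0Ut,
      ← Matrix.mul_assoc, hPpUt]
    simp
  refine ⟨hunit, hPp', hPpP0Ht, ?_⟩
  have : Pp * Pp * P₀ * Hᵀ = Pp * (Pp * P₀ * Hᵀ) := by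
    simp only [Matrix.mul_assoc]
  rw [this, hPpP0Ht]
  simp
end

section
/- Let H be an m×n real matrix with H Hᵀ = I_m, and define V₂(H) = (2/3) tr[Hᵀ (H − H ∘ H)], where ∘ denotes the entrywise (Hadamard) product. Then V₂(H) ≥ 0, and V₂(H) = 0 if and only if every entry of H lies in {0, 1}, i.e. if and only if every row of H is a standard basis vector of ℝⁿ (and distinct rows are distinct standard basis vectors). -/
open Matrix

/-- Properties of the permutation-penalty cost `V₂(H) = (2/3) tr[Hᵀ (H − H ∘ H)]` on matrices
with orthonormal rows: `V₂(H) ≥ 0`, and `V₂(H) = 0` iff every entry of `H` lies in `{0,1}`,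
iff every row of `H` is a standard basis vector of `ℝⁿ` (distinct rows being distinct
standard basis vectors). -/
theorem stmt_16 {m n : ℕ}
    (H : Matrix (Fin m) (Fin n) ℝ) (horth : H * Hᵀ = 1)
    (V₂ : ℝ)
    (hV₂ : V₂ = (2 / 3) * Matrix.trace (Hᵀ * (H - Matrix.hadamard H H))) :
    0 ≤ V₂ ∧
      (V₂ = 0 ↔ ∀ i j, H i j = 0 ∨ H i j = 1) ∧
      (V₂ = 0 ↔ ∃ f : Fin m → Fin n, Function.Injective f ∧
        ∀ i : Fin m, H i = Pi.single (f i) (1 : ℝ)) := by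
  have hrow : ∀ i, ∑ j, H i j * H i j = 1 := by
    intro i
    have := congrFun (congrFun horth i) i
    simpa [Matrix.mul_apply, Matrix.one_apply] using this
  have horthog : ∀ i k, i ≠ k → ∑ j, H i j * H k j = 0 := by
    intro i k hik
    have := congrFun (congrFun horth i) k
    simpa [Matrix.mul_apply, Matrix.one_apply, hik] using this
  have hsqle : ∀ i j, H i j * H i j ≤ 1 := by
    intro i j
    calc H i j * H i j ≤ ∑ j', H i j' * H i j' :=
          Finset.single_le_sum (fun j' _ => mul_self_nonneg (H i j')) (Finset.mem_univ j)
      _ = 1 := hrow i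
  have hle1 : ∀ i j, H i j ≤ 1 := by
    intro i j
    nlinarith [hsqle i j]
  have htr : Matrix.trace (Hᵀ * (H - Matrix.hadamard H H)) =
      ∑ i, ∑ j, H i j ^ 2 * (1 - H i j) := by
    rw [Matrix.trace]
    simp only [Matrix.diag_apply, Matrix.mul_apply, Matrix.transpose_apply,
      Matrix.sub_apply, Matrix.hadamard_apply]
    rw [Finset.sum_comm]
    apply Finset.sum_congr rfl
    intro i _
    apply Finset.sum_congr rfl
    intro j _
    ring
  have hterm : ∀ i ∈ (Finset.univ : Finset (Fin m)), 0 ≤ ∑ j, H i j ^ 2 * (1 - H i j) := by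
    intro i _
    exact Finset.sum_nonneg fun j _ => mul_nonneg (sq_nonneg _) (by linarith [hle1 i j])
  have hSnn : 0 ≤ ∑ i, ∑ j, H i j ^ 2 * (1 - H i j) := Finset.sum_nonneg hterm
  have hiff1 : V₂ = 0 ↔ ∀ i j, H i j = 0 ∨ H i j = 1 := by
    rw [hV₂, htr]
    constructor
    · intro h0 i j
      have hS0 : ∑ i, ∑ j, H i j ^ 2 * (1 - H i j) = 0 := by linarith
      have h1 := (Finset.sum_eq_zero_iff_of_nonneg hterm).mp hS0 i (Finset.mem_univ i)
      have h2 := (Finset.sum_eq_zero_iff_of_nonneg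
        (fun j _ => mul_nonneg (sq_nonneg _) (by linarith [hle1 i j]))).mp h1 j
        (Finset.mem_univ j)
      rcases mul_eq_zero.mp h2 with h | h
      · left; exact pow_eq_zero_iff (by norm_num) |>.mp h
      · right; linarith
    · intro h
      have : ∑ i, ∑ j, H i j ^ 2 * (1 - H i j) = 0 := by
        apply Finset.sum_eq_zero
        intro i _
        apply Finset.sum_eq_zero
        intro j _
        rcases h i j with h | h <;> rw [h] <;> ring
      rw [this]; ring
  refine ⟨by rw [hV₂, htr]; positivity, hiff1, hiff1.trans ?_⟩
  constructor
  · intro h01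
    -- for each i, there is a unique j with H i j = 1
    have hex : ∀ i, ∃ j, H i j = 1 := by
      intro i
      by_contra hc
      push_neg at hc
      have : ∑ j, H i j * H i j = 0 := by
        apply Finset.sum_eq_zero
        intro j _
        rcases h01 i j with h | h
        · rw [h]; ring
        · exact absurd h (hc j)
      rw [hrow i] at this
      norm_num at this
    choose f hf using hex
    have hzero : ∀ i j, j ≠ f i → H i j = 0 := by
      intro i j hj
      have hsum : ∑ j', H i j' * H i j' = 1 := hrow i
      have hsplit : H i (f i) * H i (f i) + ∑ j' ∈ Finset.univ.erase (f i), H i j' * H i j' = 1 := by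
        rw [Finset.add_sum_erase Finset.univ (fun j' => H i j' * H i j') (Finset.mem_univ (f i))]
        exact hsum
      rw [hf i] at hsplit
      have hrest : ∑ j' ∈ Finset.univ.erase (f i), H i j' * H i j' = 0 := by linarith
      have := (Finset.sum_eq_zero_iff_of_nonneg
        (fun j' _ => mul_self_nonneg (H i j'))).mp hrest j
        (Finset.mem_erase.mpr ⟨hj, Finset.mem_univ j⟩)
      exact mul_self_eq_zero.mp this
    refine ⟨f, ?_, ?_⟩
    · intro i k hik
      by_contra hne
      have horto := horthog i k hne
      have hpos : (0:ℝ) < ∑ j, H i j * H k j := by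
        have h1 : H i (f i) * H k (f i) = 1 := by rw [hf i, hik, hf k]; ring
        have hsp := Finset.add_sum_erase Finset.univ (fun j => H i j * H k j) (Finset.mem_univ (f i))
        rw [← hsp, h1]
        have : 0 ≤ ∑ j ∈ Finset.univ.erase (f i), H i j * H k j := by
          apply Finset.sum_nonneg
          intro j hj
          rcases h01 i j with h | h <;> rcases h01 k j with h' | h' <;>
            rw [h, h'] <;> norm_num
        linarith
      linarith [hpos, horto.le]
    · intro i
      funext j
      by_cases hj : j = f i
      · subst hj; rw [hf i, Pi.single_eq_same]
      · rw [hzero i j hj, Pi.single_eq_of_ne hj]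
  · rintro ⟨f, _, hf⟩ i j
    rw [hf i]
    by_cases hj : j = f i
    · subst hj; right; exact Pi.single_eq_same _ _
    · left; exact Pi.single_eq_of_ne hj _
end

section
/- Let H : ℝ → (m×n real matrices) be differentiable and satisfy the matrix differential equation Ḣ(t) = −H(t) [ (H(t) ∘ H(t))ᵀ H(t) − H(t)ᵀ (H(t) ∘ H(t)) ] for all t, with H(0) H(0)ᵀ = I_m. Then H(t) H(t)ᵀ = I_m for all t. -/
open Matrix

-- Equip matrices with the Frobenius norm, so that `HasDerivAt` makes sense.
attribute [local instance]
  Matrix.frobeniusSeminormedAddCommGroup Matrix.frobeniusNormedAddCommGroup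
  Matrix.frobeniusIsBoundedSMul Matrix.frobeniusNormedSpace

/-!
Write the flow as `Ḣ = H S` with `S = -((H∘H)ᵀH - Hᵀ(H∘H))`, which is skew-symmetric since it
has the form `-(Mᵀ N - Nᵀ M)`. Then `d/dt (H Hᵀ) = H S Hᵀ + H Sᵀ Hᵀ = 0`, so `H Hᵀ` stays equal
to its initial value `I_m`.
-/

section Calculus

variable {𝕜 : Type*} [RCLike 𝕜] {l m n : Type*} [Fintype l] [Fintype m] [Fintype n]

noncomputable def Matrix.mulCLM : Matrix l m 𝕜 →L[𝕜] Matrix m n 𝕜 →L[𝕜] Matrix l n 𝕜 :=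
  (mulLinearMap 𝕜).mkContinuous₂ 1 fun A B => by
    simpa using Matrix.frobenius_norm_mul A B

theorem HasDerivAt.matrix_mul {A : 𝕜 → Matrix l m 𝕜} {B : 𝕜 → Matrix m n 𝕜}
    {A' : Matrix l m 𝕜} {B' : Matrix m n 𝕜} {t : 𝕜}
    (hA : HasDerivAt A A' t) (hB : HasDerivAt B B' t) :
    HasDerivAt (fun s => A s * B s) (A t * B' + A' * B t) t :=
  Matrix.mulCLM.hasDerivAt_of_bilinear (fun _ => hA) (fun _ => hB)

theorem HasDerivAt.matrix_transpose {A : 𝕜 → Matrix m n 𝕜} {A' : Matrix m n 𝕜} {t : 𝕜}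
    (hA : HasDerivAt A A' t) : HasDerivAt (fun s => (A s)ᵀ) A'ᵀ t :=
  (transposeLinearEquiv m n 𝕜 𝕜).toLinearMap.toContinuousLinearMap.hasFDerivAt.comp_hasDerivAt
    t hA

end Calculus

theorem Matrix.transpose_mul_sub_transpose_mul_transpose {α m n : Type*} [CommRing α]
    [Fintype m] (M N : Matrix m n α) :
    (Mᵀ * N - Nᵀ * M)ᵀ = -(Mᵀ * N - Nᵀ * M) := by
  simp only [transpose_sub, transpose_mul, transpose_transpose, neg_sub]

theorem mul_transpose_self_eq_of_hasDerivAt_mul_skew {m n : Type*} [Fintype m] [Fintype n]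
    {A : ℝ → Matrix m n ℝ} {S : ℝ → Matrix n n ℝ} (hS : ∀ t, (S t)ᵀ = -S t)
    (hA : ∀ t, HasDerivAt A (A t * S t) t) (t s : ℝ) :
    A t * (A t)ᵀ = A s * (A s)ᵀ := by
  have hderiv : ∀ t, HasDerivAt (fun t => A t * (A t)ᵀ) 0 t := fun t => by
    convert (hA t).matrix_mul (hA t).matrix_transpose using 1
    simp only [transpose_mul, hS, Matrix.neg_mul, Matrix.mul_neg, Matrix.mul_assoc,
      neg_add_cancel]
  exact is_const_of_deriv_eq_zero (fun t => (hderiv t).differentiableAt)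
    (fun t => (hderiv t).deriv) t s

/-- The gradient flow `Ḣ = −H [(H∘H)ᵀH − Hᵀ(H∘H)]` of the permutation-penalty cost leaves
the set of matrices with orthonormal rows invariant: if `H(0) H(0)ᵀ = I_m` then
`H(t) H(t)ᵀ = I_m` for all `t`. Here `∘` is the Hadamard (entrywise) product. -/
theorem stmt_17 {m n : ℕ}
    (H : ℝ → Matrix (Fin m) (Fin n) ℝ)
    (hode : ∀ t : ℝ, HasDerivAt H
      (-(H t * ((Matrix.hadamard (H t) (H t))ᵀ * H t - (H t)ᵀ * Matrix.hadamard (H t) (H t)))) t)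
    (h0 : H 0 * (H 0)ᵀ = 1) :
    ∀ t : ℝ, H t * (H t)ᵀ = 1 := by
  let S : ℝ → Matrix (Fin n) (Fin n) ℝ := fun t => -((H t ⊙ H t)ᵀ * H t - (H t)ᵀ * (H t ⊙ H t))
  have hskew : ∀ t, (S t)ᵀ = -S t := fun t => by
    simp only [S, transpose_neg, transpose_mul_sub_transpose_mul_transpose]
  have hflow : ∀ t, HasDerivAt H (H t * S t) t := fun t => by
    simpa only [S, Matrix.mul_neg] using hode t
  intro t
  rw [mul_transpose_self_eq_of_hasDerivAt_mul_skew hskew hflow t 0, h0]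
end
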